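/- arXiv:2105.03081 — 4 statements merged into one kernel-verified Lean document; each statement's English description precedes it below -/
import Mathlib

section
/- For every optimal policy π* and every state s ∈ S: μ^{π*}_s(Safe) = μ^{π*}_s({ω : ∃ t, ω t ∈ W}), i.e., under an optimal policy the probability of satisfying the safety condition equals the probability of eventually reaching the winning region W. -/
/-! Under an optimal policy the winning region is the set of states from which the optimal policy
itself is almost surely safe: the return is nonpositive and vanishes exactly on paths that avoid
`Acc` after time `0`, so a winning state has value `0`, and an optimal policy attaining this value
almost surely never enters `Acc`.

The theorem is then a fact about a single finite Markov chain: the probability of staying in `D`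
forever equals the probability of reaching the set `Z` of states from which staying in `D` is
almost sure. A state of `Z` averages the values of its successors to `1`, so `Z` is closed and is
never left once reached. Staying in `D \ Z` forever has probability zero by a maximum principle:
the states maximising that probability form a closed subset of `D \ Z`, from which the chain
could never leave `D`. -/

open MeasureTheory Set
open scoped ENNReal Classical

variable {S : Type*}

def IsPathMeasure [MeasurableSpace S] (P : S → PMF S) (μ : S → Measure (ℕ → S)) : Prop :=
  (∀ s, IsProbabilityMeasure (μ s)) ∧
    ∀ (s : S) (n : ℕ) (x : ℕ → S),
      μ s {ω | ∀ i ≤ n, ω i = x i} =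
        (if x 0 = s then 1 else 0) * ∏ i ∈ Finset.range n, (P (x i)) (x (i + 1))

noncomputable def Rw (Acc : Set S) (γacc rn : ℝ) (s : S) : ℝ :=
  if s ∈ Acc then (1 - γacc) * rn else 0

noncomputable def Γw (Acc : Set S) (γacc γ : ℝ) (s : S) : ℝ :=
  if s ∈ Acc then γacc else γ

noncomputable def Ret (Acc : Set S) (γacc γ rn : ℝ) (ω : ℕ → S) : ℝ :=
  ∑' t : ℕ, Rw Acc γacc rn (ω (t + 1)) * ∏ k ∈ Finset.range t, Γw Acc γacc γ (ω (k + 1))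

noncomputable def Val [MeasurableSpace S] (Acc : Set S) (γacc γ rn : ℝ)
    (μ : S → Measure (ℕ → S)) (s : S) : ℝ :=
  ∫ ω, Ret Acc γacc γ rn ω ∂ (μ s)

variable {A : S → Type*}

noncomputable def Valp [MeasurableSpace S] (Acc : Set S) (γacc γ rn : ℝ)
    (μ : ((s : S) → A s) → S → Measure (ℕ → S)) (π : (s : S) → A s) (s : S) : ℝ :=
  ∫ ω, Ret Acc γacc γ rn ω ∂ (μ π s)

noncomputable def Qp [MeasurableSpace S] [Fintype S]
    (P : (s : S) → A s → PMF S) (Acc : Set S) (γacc γ rn : ℝ)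
    (μ : ((s : S) → A s) → S → Measure (ℕ → S)) (π : (s : S) → A s) (s : S) (a : A s) : ℝ :=
  ∑ s' : S, (P s a s').toReal *
    (Rw Acc γacc rn s' + Γw Acc γacc γ s' * Valp Acc γacc γ rn μ π s')

noncomputable def Qstar [MeasurableSpace S] [Fintype S]
    (P : (s : S) → A s → PMF S) (Acc : Set S) (γacc γ rn : ℝ)
    (μ : ((s : S) → A s) → S → Measure (ℕ → S)) (s : S) (a : A s) : ℝ :=
  ⨆ π : (s' : S) → A s', Qp P Acc γacc γ rn μ π s a

def WinRegion [MeasurableSpace S] (Acc : Set S)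
    (μ : ((s : S) → A s) → S → Measure (ℕ → S)) : Set S :=
  {s | ∃ π : (s' : S) → A s', μ π s {ω | ∀ t, ω t ∉ Acc} = 1}

def IsOptimal [MeasurableSpace S] (Acc : Set S) (γacc γ rn : ℝ)
    (μ : ((s : S) → A s) → S → Measure (ℕ → S)) (πo : (s : S) → A s) : Prop :=
  ∀ s, Valp Acc γacc γ rn μ πo s = ⨆ π : (s' : S) → A s', Valp Acc γacc γ rn μ π s

section DiscountedSum

open Finset

variable {r g : ℕ → ℝ} {B ρ : ℝ}

lemma norm_mul_prod_range_le (hr : ∀ t, |r t| ≤ B) (hg : ∀ k, |g k| ≤ ρ) (t : ℕ) :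
    ‖r t * ∏ k ∈ range t, g k‖ ≤ B * ρ ^ t := by
  have hB : 0 ≤ B := (abs_nonneg _).trans (hr 0)
  rw [Real.norm_eq_abs, abs_mul, Finset.abs_prod]
  calc |r t| * ∏ k ∈ range t, |g k| ≤ B * ∏ _k ∈ range t, ρ := by
        gcongr with k
        exacts [hr t, hg k]
    _ = B * ρ ^ t := by rw [prod_const, card_range]

lemma summable_mul_prod_range (hr : ∀ t, |r t| ≤ B) (hg : ∀ k, |g k| ≤ ρ) (hρ : ρ < 1) :
    Summable fun t ↦ r t * ∏ k ∈ range t, g k :=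
  .of_norm_bounded ((summable_geometric_of_lt_one ((abs_nonneg _).trans (hg 0)) hρ).mul_left B)
    (norm_mul_prod_range_le hr hg)

lemma abs_tsum_mul_prod_range_le (hr : ∀ t, |r t| ≤ B) (hg : ∀ k, |g k| ≤ ρ) (hρ : ρ < 1) :
    |∑' t, r t * ∏ k ∈ range t, g k| ≤ B * (1 - ρ)⁻¹ :=
  tsum_of_norm_bounded ((hasSum_geometric_of_lt_one ((abs_nonneg _).trans (hg 0)) hρ).mul_left B)
    (norm_mul_prod_range_le hr hg)

lemma tsum_mul_prod_range_nonpos (hr : ∀ t, r t ≤ 0) (hg : ∀ k, 0 ≤ g k) :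
    ∑' t, r t * ∏ k ∈ range t, g k ≤ 0 :=
  tsum_nonpos fun t ↦ mul_nonpos_of_nonpos_of_nonneg (hr t) (prod_nonneg fun k _ ↦ hg k)

lemma tsum_mul_prod_range_eq_zero_iff (hr : ∀ t, r t ≤ 0) (hg : ∀ k, 0 < g k)
    (hsum : Summable fun t ↦ r t * ∏ k ∈ range t, g k) :
    ∑' t, r t * ∏ k ∈ range t, g k = 0 ↔ ∀ t, r t = 0 := by
  refine ⟨fun h t ↦ ?_, fun h ↦ by simp [h]⟩
  by_contra hne
  have hlt : r t * ∏ k ∈ range t, g k < 0 :=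
    mul_neg_of_neg_of_pos ((hr t).lt_of_ne hne) (prod_pos fun k _ ↦ hg k)
  have := hsum.tsum_lt_tsum (fun t ↦ mul_nonpos_of_nonpos_of_nonneg (hr t)
    (prod_nonneg fun k _ ↦ (hg k).le)) hlt summable_zero
  simp [h] at this

end DiscountedSum

section Return

variable {Acc : Set S} {γacc γ rn : ℝ}

lemma abs_Rw_le (s : S) : |Rw Acc γacc rn s| ≤ |(1 - γacc) * rn| := by
  unfold Rw
  split_ifs
  exacts [le_rfl, abs_zero.trans_le (abs_nonneg _)]

lemma abs_Γw_le (hγ : 0 < γ) (hγacc : 0 < γacc) (s : S) :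
    |Γw Acc γacc γ s| ≤ max γ γacc := by
  unfold Γw; split_ifs <;> simp [abs_of_pos, *]

lemma Γw_pos (hγ : 0 < γ) (hγacc : 0 < γacc) (s : S) : 0 < Γw Acc γacc γ s := by
  unfold Γw; split_ifs <;> assumption

lemma Rw_nonpos (hrn : rn < 0) (hγacc : γacc < 1) (s : S) : Rw Acc γacc rn s ≤ 0 := by
  unfold Rw; split_ifs <;> nlinarith

lemma Rw_eq_zero_iff (hrn : rn < 0) (hγacc : γacc < 1) (s : S) :
    Rw Acc γacc rn s = 0 ↔ s ∉ Acc := by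
  unfold Rw; split_ifs with hs <;> simp [hs, hrn.ne, (sub_pos.2 hγacc).ne']

lemma Ret_nonpos (hrn : rn < 0) (hγ : 0 < γ ∧ γ < 1) (hγacc : 0 < γacc ∧ γacc < 1)
    (ω : ℕ → S) : Ret Acc γacc γ rn ω ≤ 0 :=
  tsum_mul_prod_range_nonpos (fun _ ↦ Rw_nonpos hrn hγacc.2 _)
    (fun _ ↦ (Γw_pos hγ.1 hγacc.1 _).le)

lemma abs_Ret_le (hγ : 0 < γ ∧ γ < 1) (hγacc : 0 < γacc ∧ γacc < 1) (ω : ℕ → S) :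
    |Ret Acc γacc γ rn ω| ≤ |(1 - γacc) * rn| * (1 - max γ γacc)⁻¹ :=
  abs_tsum_mul_prod_range_le (fun _ ↦ abs_Rw_le _) (fun _ ↦ abs_Γw_le hγ.1 hγacc.1 _)
    (max_lt hγ.2 hγacc.2)

lemma Ret_eq_zero_iff (hrn : rn < 0) (hγ : 0 < γ ∧ γ < 1) (hγacc : 0 < γacc ∧ γacc < 1)
    (ω : ℕ → S) : Ret Acc γacc γ rn ω = 0 ↔ ∀ t, ω (t + 1) ∉ Acc := by
  unfold Ret
  rw [tsum_mul_prod_range_eq_zero_iff (fun _ ↦ Rw_nonpos hrn hγacc.2 _)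
    (fun _ ↦ Γw_pos hγ.1 hγacc.1 _) (summable_mul_prod_range (fun _ ↦ abs_Rw_le _)
      (fun _ ↦ abs_Γw_le hγ.1 hγacc.1 _) (max_lt hγ.2 hγacc.2))]
  simp only [Rw_eq_zero_iff hrn hγacc.2]

lemma measurable_Ret [MeasurableSpace S] [DiscreteMeasurableSpace S] :
    Measurable (Ret Acc γacc γ rn) :=
  Measurable.tsum fun t ↦ by fun_prop

variable [MeasurableSpace S] (ν : Measure (ℕ → S))

lemma integral_Ret_nonpos (hrn : rn < 0) (hγ : 0 < γ ∧ γ < 1) (hγacc : 0 < γacc ∧ γacc < 1) :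
    ∫ ω, Ret Acc γacc γ rn ω ∂ν ≤ 0 :=
  integral_nonpos fun ω ↦ Ret_nonpos hrn hγ hγacc ω

lemma integral_Ret_eq_zero_iff [DiscreteMeasurableSpace S] [IsFiniteMeasure ν] (hrn : rn < 0)
    (hγ : 0 < γ ∧ γ < 1) (hγacc : 0 < γacc ∧ γacc < 1) :
    ∫ ω, Ret Acc γacc γ rn ω ∂ν = 0 ↔ ∀ᵐ ω ∂ν, ∀ t, ω (t + 1) ∉ Acc := by
  have hint : Integrable (Ret Acc γacc γ rn) ν :=
    .of_bound measurable_Ret.aestronglyMeasurable _ (ae_of_all _ (abs_Ret_le hγ hγacc))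
  rw [← neg_eq_zero, ← integral_neg, integral_eq_zero_iff_of_nonneg
    (fun ω ↦ neg_nonneg.2 (Ret_nonpos hrn hγ hγacc ω)) hint.neg]
  exact Filter.eventually_congr (ae_of_all _ fun ω ↦ by
    simp [neg_eq_zero, Ret_eq_zero_iff hrn hγ hγacc])

end Return

lemma PMF.sum_coe {α : Type*} [Fintype α] (p : PMF α) : ∑ a, p a = 1 := by
  rw [← tsum_fintype (L := .unconditional α), p.tsum_coe]

lemma PMF.eq_of_le_sum_mul {α : Type*} [Fintype α] (p : PMF α) {f : α → ℝ≥0∞} {M : ℝ≥0∞}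
    (hf : ∀ b, f b ≤ M) (hM : M ≠ ∞) (h : M ≤ ∑ b, p b * f b) {a : α} (ha : a ∈ p.support) :
    f a = M := by
  refine (hf a).antisymm (not_lt.1 fun hlt ↦ lt_irrefl M (h.trans_lt ?_))
  have hmass : ∑ b, p b * M = M := by
    rw [← Finset.sum_mul, p.sum_coe, one_mul]
  calc ∑ b, p b * f b = p a * f a + ∑ b ∈ Finset.univ.erase a, p b * f b :=
        (Finset.add_sum_erase _ _ (Finset.mem_univ a)).symm
    _ < p a * M + ∑ b ∈ Finset.univ.erase a, p b * M :=
        ENNReal.add_lt_add_of_lt_of_le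
          (ENNReal.sum_ne_top.2 fun b _ ↦
            ENNReal.mul_ne_top (p.apply_ne_top b) ((hf b).trans_lt hM.lt_top).ne)
          (ENNReal.mul_lt_mul_right ((p.mem_support_iff a).1 ha) (p.apply_ne_top a) hlt)
          (Finset.sum_le_sum fun b _ ↦ by gcongr; exact hf b)
    _ = M := by rw [Finset.add_sum_erase _ (fun b ↦ p b * M) (Finset.mem_univ a), hmass]

section PathMeasure

def consPath (s : S) (ω : ℕ → S) : ℕ → S
  | 0 => s
  | n + 1 => ω n

@[simp] lemma consPath_zero (s : S) (ω : ℕ → S) : consPath s ω 0 = s := rfl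

@[simp] lemma consPath_succ (s : S) (ω : ℕ → S) (n : ℕ) : consPath s ω (n + 1) = ω n := rfl

variable [MeasurableSpace S]

lemma measurable_consPath (s : S) : Measurable (consPath s) :=
  measurable_pi_lambda _ fun n ↦ by
    cases n
    exacts [measurable_const, measurable_pi_apply _]

lemma MeasureTheory.Measure.ext_of_prefix_cylinder [Countable S] [MeasurableSingletonClass S]
    {μ₁ μ₂ : Measure (ℕ → S)} [IsFiniteMeasure μ₁]
    (h : ∀ n (x : ℕ → S), μ₁ {ω | ∀ i ≤ n, ω i = x i} = μ₂ {ω | ∀ i ≤ n, ω i = x i}) : μ₁ = μ₂ := by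
  have hmap : ∀ N, μ₁.map (Finset.Iic N).restrict = μ₂.map (Finset.Iic N).restrict := by
    refine fun N ↦ Measure.ext_iff_singleton.2 fun y ↦ ?_
    rw [Measure.map_apply (Finset.measurable_restrict _) (measurableSet_singleton y),
      Measure.map_apply (Finset.measurable_restrict _) (measurableSet_singleton y)]
    obtain hy | ⟨x, hx⟩ := ((Finset.Iic N).restrict (π := fun _ ↦ S) ⁻¹' {y}).eq_empty_or_nonempty
    · rw [hy, measure_empty, measure_empty]
    · have hcyl : (Finset.Iic N).restrict (π := fun _ ↦ S) ⁻¹' {y} = {ω | ∀ i ≤ N, ω i = x i} := by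
        ext ω
        simp only [mem_preimage, mem_singleton_iff] at hx ⊢
        simp [← hx, funext_iff]
      rw [hcyl, h]
  refine ext_of_generate_finite _ generateFrom_measurableCylinders.symm
    isPiSystem_measurableCylinders (fun t ht ↦ ?_) ?_
  · simp only [measurableCylinders_nat, mem_iUnion, mem_singleton_iff] at ht
    obtain ⟨N, T, hT, rfl⟩ := ht
    rw [cylinder, ← Measure.map_apply (Finset.measurable_restrict _) hT,
      ← Measure.map_apply (Finset.measurable_restrict _) hT, hmap]
  · rw [← preimage_univ (f := (Finset.Iic 0).restrict),
      ← Measure.map_apply (Finset.measurable_restrict _) MeasurableSet.univ,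
      ← Measure.map_apply (Finset.measurable_restrict _) MeasurableSet.univ, hmap]

namespace IsPathMeasure

variable [MeasurableSingletonClass S] {P : S → PMF S} {ν : S → Measure (ℕ → S)}

lemma ae_head (hν : IsPathMeasure P ν) (s : S) : ∀ᵐ ω ∂ν s, ω 0 = s := by
  have := hν.1 s
  have h := hν.2 s 0 fun _ ↦ s
  simp only [nonpos_iff_eq_zero, forall_eq, if_true, Finset.range_zero, Finset.prod_empty,
    mul_one] at h
  have hmeas : MeasurableSet {ω : ℕ → S | ω 0 = s} := by measurability
  rw [ae_iff_measure_eq hmeas.nullMeasurableSet, h, measure_univ]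

lemma eq_sum_smul_map_consPath [Fintype S] (hν : IsPathMeasure P ν) (s : S) :
    ν s = ∑ y, P s y • (ν y).map (consPath s) := by
  have := hν.1
  refine Measure.ext_of_prefix_cylinder fun n x ↦ ?_
  have hcyl : MeasurableSet {ω : ℕ → S | ∀ i ≤ n, ω i = x i} := by measurability
  rw [hν.2, Measure.finsetSum_apply]
  simp_rw [Measure.smul_apply, Measure.map_apply (measurable_consPath s) hcyl, smul_eq_mul]
  by_cases hx : x 0 = s
  · cases n with
    | zero => simp [hx, PMF.sum_coe]
    | succ n =>
      have hpre : consPath s ⁻¹' {ω | ∀ i ≤ n + 1, ω i = x i} =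
          {ω | ∀ i ≤ n, ω i = x (i + 1)} := by
        ext ω
        refine ⟨fun h i hi ↦ h (i + 1) (by omega), fun h i hi ↦ ?_⟩
        cases i with
        | zero => exact hx.symm
        | succ i => exact h i (by omega)
      simp_rw [hpre, hν.2, Finset.prod_range_succ']
      simp [hx, mul_comm]
  · have hpre : consPath s ⁻¹' {ω | ∀ i ≤ n, ω i = x i} = ∅ :=
      eq_empty_of_forall_notMem fun ω h ↦ hx (h 0 n.zero_le).symm
    simp [hpre, hx]

variable [Fintype S]

lemma measure_eq_sum (hν : IsPathMeasure P ν) (s : S) {E : Set (ℕ → S)} (hE : MeasurableSet E) :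
    ν s E = ∑ y, P s y * ν y (consPath s ⁻¹' E) := by
  conv_lhs => rw [hν.eq_sum_smul_map_consPath s]
  simp [Measure.finsetSum_apply, Measure.map_apply (measurable_consPath s) hE]

lemma ae_of_forall_mem_support (hν : IsPathMeasure P ν) {s : S} {Q : (ℕ → S) → Prop}
    (hQ : MeasurableSet {ω | Q ω}) (h : ∀ y ∈ (P s).support, ∀ᵐ ω ∂ν y, Q (consPath s ω)) :
    ∀ᵐ ω ∂ν s, Q ω := by
  rw [ae_iff, ← compl_ofPred, hν.measure_eq_sum s hQ.compl]
  refine Finset.sum_eq_zero fun y _ ↦ ?_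
  by_cases hy : y ∈ (P s).support
  · rw [show consPath s ⁻¹' {ω | Q ω}ᶜ = {ω | ¬Q (consPath s ω)} from rfl,
      ae_iff.1 (h y hy), mul_zero]
  · rw [(P s).mem_support_iff, not_not] at hy
    rw [hy, zero_mul]

variable {C : Set S}

lemma ae_forall_mem_of_mem (hν : IsPathMeasure P ν) (hC : ∀ x ∈ C, (P x).support ⊆ C)
    {s : S} (hs : s ∈ C) : ∀ᵐ ω ∂ν s, ∀ t, ω t ∈ C := by
  rw [ae_all_iff]
  intro t
  induction t generalizing s with
  | zero => exact (hν.ae_head s).mono fun ω h ↦ h ▸ hs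
  | succ t ih =>
    exact hν.ae_of_forall_mem_support (by measurability) fun y hy ↦ ih (hC s hs hy)

lemma ae_forall_le_mem_of_mem (hν : IsPathMeasure P ν) (hC : ∀ x ∈ C, (P x).support ⊆ C)
    (s : S) : ∀ᵐ ω ∂ν s, ∀ t, ω t ∈ C → ∀ k, t ≤ k → ω k ∈ C := by
  rw [ae_all_iff]
  intro t
  induction t generalizing s with
  | zero =>
    by_cases hs : s ∈ C
    · filter_upwards [hν.ae_forall_mem_of_mem hC hs] with ω hω _ k _ using hω k
    · filter_upwards [hν.ae_head s] with ω h0 hω using absurd (h0 ▸ hω) hs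
  | succ t ih =>
    refine hν.ae_of_forall_mem_support (by measurability) fun y _ ↦ ?_
    filter_upwards [ih y] with ω hω ht k hk
    obtain ⟨k, rfl⟩ := Nat.exists_eq_add_one.2 (t.succ_pos.trans_le hk)
    exact hω ht k (by omega)

variable (D : Set S)

lemma measure_forall_mem_eq_ite (hν : IsPathMeasure P ν) (s : S) :
    ν s {ω | ∀ t, ω t ∈ D} = if s ∈ D then ∑ y, P s y * ν y {ω | ∀ t, ω t ∈ D} else 0 := by
  rw [hν.measure_eq_sum s (by measurability)]
  split_ifs with hs
  · have hpre : consPath s ⁻¹' {ω | ∀ t, ω t ∈ D} = {ω | ∀ t, ω t ∈ D} := by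
      ext ω
      refine ⟨fun h t ↦ h (t + 1), fun h t ↦ ?_⟩
      cases t
      exacts [hs, h _]
    rw [hpre]
  · have hpre : consPath s ⁻¹' {ω | ∀ t, ω t ∈ D} = ∅ :=
      eq_empty_of_forall_notMem fun ω h ↦ hs (h 0)
    simp [hpre]

variable {D}

lemma measure_forall_mem_eq_of_forall_le (hν : IsPathMeasure P ν) {x y : S}
    (hmax : ∀ z, ν z {ω | ∀ t, ω t ∈ D} ≤ ν x {ω | ∀ t, ω t ∈ D}) (hy : y ∈ (P x).support) :
    ν y {ω | ∀ t, ω t ∈ D} = ν x {ω | ∀ t, ω t ∈ D} := by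
  have := hν.1
  have hrec := hν.measure_forall_mem_eq_ite D x
  split_ifs at hrec with hx
  · exact (P x).eq_of_le_sum_mul hmax (measure_ne_top _ _) hrec.le hy
  · rw [hrec]
    exact nonpos_iff_eq_zero.1 (hrec ▸ hmax y)

lemma measure_forall_mem_eq_zero (hν : IsPathMeasure P ν)
    (hD : ∀ x ∈ D, ν x {ω | ∀ t, ω t ∈ D} < 1) (s : S) : ν s {ω | ∀ t, ω t ∈ D} = 0 := by
  have := hν.1
  set f := fun x ↦ ν x {ω | ∀ t, ω t ∈ D} with hf
  obtain ⟨c, -, hc⟩ := Finset.univ.exists_max_image f ⟨s, Finset.mem_univ s⟩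
  by_contra hs
  have hpos : f c ≠ 0 := fun h ↦ hs (nonpos_iff_eq_zero.1 (h ▸ hc s (Finset.mem_univ s)))
  set K := {x | f x = f c}
  have hKD : K ⊆ D := fun x hx ↦ by
    by_contra hxD
    have hrec := hν.measure_forall_mem_eq_ite D x
    rw [if_neg hxD] at hrec
    exact hpos (hx.symm.trans hrec)
  have hK : ∀ x ∈ K, (P x).support ⊆ K := fun x (hx : f x = f c) y hy ↦
    (hν.measure_forall_mem_eq_of_forall_le (fun z ↦ (hc z (Finset.mem_univ z)).trans hx.ge)
      hy).trans hx
  have hstay : f c = 1 := by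
    rw [hf, ← measure_univ (μ := ν c), ← ae_iff_measure_eq (by measurability)]
    filter_upwards [hν.ae_forall_mem_of_mem hK rfl] with ω hω t using hKD (hω t)
  exact (hD c (hKD rfl)).ne hstay

theorem measure_forall_mem_eq_measure_exists (hν : IsPathMeasure P ν)
    (hD : ∀ x ∈ Dᶜ, (P x).support ⊆ Dᶜ) (s : S) :
    ν s {ω | ∀ t, ω t ∈ D} = ν s {ω | ∃ t, ν (ω t) {ω' | ∀ t, ω' t ∈ D} = 1} := by
  have := hν.1
  set Z := {x | ν x {ω | ∀ t, ω t ∈ D} = 1}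
  have hZ : ∀ x ∈ Z, (P x).support ⊆ Z := fun x hx y hy ↦
    (hν.measure_forall_mem_eq_of_forall_le (fun z ↦ hx ▸ prob_le_one) hy).trans hx
  have hZD : Z ⊆ D := fun x hx ↦ by
    by_contra hxD
    have hrec := hν.measure_forall_mem_eq_ite D x
    rw [if_neg hxD] at hrec
    exact zero_ne_one (hrec.symm.trans hx)
  have hstay : ∀ᵐ ω ∂ν s, (∀ t, ω t ∈ D) → ∃ t, ω t ∈ Z := by
    have hnull := hν.measure_forall_mem_eq_zero (D := D ∩ Zᶜ) (fun x hx ↦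
      (measure_mono fun ω h t ↦ (h t).1).trans_lt (prob_le_one.lt_of_ne hx.2)) s
    filter_upwards [measure_eq_zero_iff_ae_notMem.1 hnull] with ω hω hωD
    by_contra! hωZ
    exact hω fun t ↦ ⟨hωD t, hωZ t⟩
  have hreach : ∀ᵐ ω ∂ν s, (∃ t, ω t ∈ Z) → ∀ t, ω t ∈ D := by
    filter_upwards [hν.ae_forall_le_mem_of_mem hZ s, hν.ae_forall_le_mem_of_mem hD s]
      with ω hωZ hωD ⟨t, ht⟩ k
    rcases le_total t k with htk | hkt
    · exact hZD (hωZ t ht k htk)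
    · by_contra hk
      exact hωD k hk t hkt (hZD ht)
  exact measure_congr ((hstay.and hreach).mono fun ω h ↦ propext ⟨h.1, h.2⟩)

end IsPathMeasure

end PathMeasure

lemma winRegion_eq_of_isOptimal [Fintype S] [MeasurableSpace S]
    [MeasurableSingletonClass S] {P : (s : S) → A s → PMF S} {Acc : Set S}
    {μ : ((s : S) → A s) → S → Measure (ℕ → S)}
    (hμ : ∀ π : (s : S) → A s, IsPathMeasure (fun s ↦ P s (π s)) (μ π)) {rn γ γacc : ℝ}
    (hrn : rn < 0) (hγ : 0 < γ ∧ γ < 1) (hγacc : 0 < γacc ∧ γacc < 1) {πo : (s : S) → A s}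
    (hopt : IsOptimal Acc γacc γ rn μ πo) :
    WinRegion Acc μ = {w | μ πo w {ω | ∀ t, ω t ∉ Acc} = 1} := by
  ext w
  refine ⟨fun ⟨π₁, hπ₁⟩ ↦ ?_, fun hw ↦ ⟨πo, hw⟩⟩
  have := (hμ π₁).1
  have := (hμ πo).1
  have hmeas : MeasurableSet {ω : ℕ → S | ∀ t, ω t ∉ Acc} := by measurability
  have hsafe₁ : ∀ᵐ ω ∂μ π₁ w, ∀ t, ω t ∉ Acc := by
    rw [ae_iff_measure_eq hmeas.nullMeasurableSet, hπ₁, measure_univ]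
  have hwAcc : w ∉ Acc := by
    obtain ⟨ω, hω, h0⟩ := (hsafe₁.and ((hμ π₁).ae_head w)).exists
    exact h0 ▸ hω 0
  have hV₁ : Valp Acc γacc γ rn μ π₁ w = 0 :=
    (integral_Ret_eq_zero_iff _ hrn hγ hγacc).2 (hsafe₁.mono fun ω h t ↦ h (t + 1))
  have hbdd : BddAbove (range fun π ↦ Valp Acc γacc γ rn μ π w) :=
    ⟨0, by rintro _ ⟨π, rfl⟩; exact integral_Ret_nonpos _ hrn hγ hγacc⟩
  have hVo : Valp Acc γacc γ rn μ πo w = 0 := by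
    have hle : Valp Acc γacc γ rn μ π₁ w ≤ Valp Acc γacc γ rn μ πo w := by
      rw [hopt w]
      exact le_ciSup hbdd π₁
    exact le_antisymm (integral_Ret_nonpos _ hrn hγ hγacc) (hV₁ ▸ hle)
  rw [mem_ofPred_eq, ← measure_univ (μ := μ πo w), ← ae_iff_measure_eq hmeas.nullMeasurableSet]
  filter_upwards [(hμ πo).ae_head w, (integral_Ret_eq_zero_iff _ hrn hγ hγacc).1 hVo]
    with ω h0 hω t
  cases t
  exacts [h0 ▸ hwAcc, hω _]

theorem optimal_policy_safety_prob_eq_reach_winning_region_general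
    [Fintype S] [MeasurableSpace S] [MeasurableSingletonClass S]
    (P : (s : S) → A s → PMF S) (Acc : Set S)
    (habs : ∀ s ∈ Acc, ∀ a : A s, (P s a).support ⊆ Acc)
    (μ : ((s : S) → A s) → S → Measure (ℕ → S))
    (hμ : ∀ π : (s : S) → A s, IsPathMeasure (fun s => P s (π s)) (μ π))
    (rn γ γacc : ℝ) (hrn : rn < 0) (hγ : 0 < γ ∧ γ < 1) (hγacc : 0 < γacc ∧ γacc < 1)
    (πo : (s : S) → A s) (hopt : IsOptimal Acc γacc γ rn μ πo) :
    ∀ s : S, μ πo s {ω | ∀ t, ω t ∉ Acc} =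
      μ πo s {ω | ∃ t, ω t ∈ WinRegion Acc μ} := by
  intro s
  rw [winRegion_eq_of_isOptimal hμ hrn hγ hγacc hopt]
  exact (hμ πo).measure_forall_mem_eq_measure_exists (D := Accᶜ)
    (fun x hx y hy ↦ not_not.2 (habs x (not_not.1 hx) (πo x) hy)) s

/-- under an optimal policy the probability of satisfying the safety
condition equals the probability of eventually reaching the winning region. -/
theorem optimal_policy_safety_prob_eq_reach_winning_region
    [Fintype S] [Nonempty S] [MeasurableSpace S] [MeasurableSingletonClass S]
    [∀ s, Fintype (A s)] [∀ s, Nonempty (A s)]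
    (P : (s : S) → A s → PMF S) (Acc : Set S)
    (habs : ∀ s ∈ Acc, ∀ a : A s, (P s a).support ⊆ Acc)
    (μ : ((s : S) → A s) → S → Measure (ℕ → S))
    (hμ : ∀ π : (s : S) → A s, IsPathMeasure (fun s => P s (π s)) (μ π))
    (rn γ γacc : ℝ) (hrn : rn < 0) (hγ : 0 < γ ∧ γ < 1) (hγacc : 0 < γacc ∧ γacc < 1)
    (πo : (s : S) → A s) (hopt : IsOptimal Acc γacc γ rn μ πo) :
    ∀ s : S, μ πo s {ω | ∀ t, ω t ∉ Acc} =
      μ πo s {ω | ∃ t, ω t ∈ WinRegion Acc μ} :=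
  optimal_policy_safety_prob_eq_reach_winning_region_general P Acc habs μ hμ rn γ γacc hrn hγ hγacc
    πo hopt
end

section
/- Fixing γ_acc ∈ (0,1) and r_n < 0, there exists γ' ∈ (0,1) such that for every γ ∈ (γ', 1) the following holds: for every kernel κ : S → PMF S satisfying, with Q* computed for discount γ, (i) for every s ∈ W, support(κ s) ⊆ ⋃ {support(P s a) : a ∈ A s and Q*(s,a) = 0}, and (ii) for every s ∉ W, κ s = P s a for some a ∈ A s maximizing Q*(s,·) over A s, and for every state s ∈ S: μ^κ_s(Safe) = max_π μ^π_s(Safe), where μ^κ_s is the path measure of the Markov chain with transition function κ started at s. -/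
open MeasureTheory Set
open scoped ENNReal Classical

variable {S : Type*}

variable {A : S → Type*}

/-!
The optimal safety probability `u* = optSafe Acc P` is the decreasing limit of value iteration,
started at `1`, for the Bellman operator that is `0` on `Acc` and maximises the expected next
value elsewhere; by continuity it is a fixed point. A kernel that plays an action of the MDP
wherever `u* < 1` is dominated by value iteration, hence at most `u*`-safe, and a kernel for
which `u*` is subharmonic off `Acc` is at least `u*`-safe. In particular a policy that is greedy
for `u*` is optimal and the winning region is `{u* = 1}`.

Almost every path stays in `Acc` once it has entered it, so its return is `0` if it is safe and
`rn * γ ^ n` if it first enters `Acc` at time `n + 1`. Hence a value vanishes exactly when the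
policy is almost surely safe, so `Q*(s, a) = 0` exactly when `a` keeps `s` inside the winning
region; and, by dominated convergence, `Q*(s, a) → rn * (1 - ∑ P s a s' * u* s')` as `γ → 1`.
There are finitely many state-action pairs, so for `γ` close to `1` every `Q*`-maximal action is
greedy for `u*`. The supervisor's kernel then keeps the winning region inside itself and is
greedy for `u*` outside it, which makes `u*` harmonic for it.
-/

open Filter Topology Function

lemma PMF.sum_coe_eq_one {α : Type*} [Fintype α] (q : PMF α) : ∑ a, q a = 1 := by
  rw [← tsum_fintype (L := SummationFilter.unconditional _)]
  exact q.tsum_coe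

lemma PMF.sum_mul_le_one {α : Type*} [Fintype α] (q : PMF α) {f : α → ℝ≥0∞} (hf : f ≤ 1) :
    ∑ a, q a * f a ≤ 1 :=
  (Finset.sum_le_sum fun a _ => mul_le_of_le_one_right' (hf a)).trans_eq q.sum_coe_eq_one

lemma PMF.sum_mul_eq_one {α : Type*} [Fintype α] (q : PMF α) {f : α → ℝ≥0∞}
    (hf : ∀ a ∈ q.support, f a = 1) : ∑ a, q a * f a = 1 := by
  refine (Finset.sum_congr rfl fun a _ => ?_).trans q.sum_coe_eq_one
  by_cases ha : a ∈ q.support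
  · rw [hf a ha, mul_one]
  · rw [(PMF.apply_eq_zero_iff q a).2 ha, zero_mul]

lemma PMF.sum_toReal_mul_mul_one_sub {α : Type*} [Fintype α] (q : PMF α) {f : α → ℝ≥0∞}
    (hf : f ≤ 1) (c : ℝ) :
    ∑ a, (q a).toReal * (c * (1 - (f a).toReal)) = c * (1 - (∑ a, q a * f a).toReal) := by
  have hq : ∑ a, (q a).toReal = 1 := by
    rw [← ENNReal.toReal_sum fun a _ => q.apply_ne_top a, q.sum_coe_eq_one, ENNReal.toReal_one]
  rw [ENNReal.toReal_sum fun a _ => ENNReal.mul_ne_top (q.apply_ne_top a)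
    (ne_top_of_le_ne_top ENNReal.one_ne_top (hf a))]
  simp only [ENNReal.toReal_mul, mul_sub, mul_one, Finset.sum_sub_distrib]
  rw [← Finset.sum_mul, hq, Finset.mul_sum]
  simp only [mul_left_comm, one_mul]

lemma tendsto_ciSup_of_finite {ι α L : Type*} [Finite ι] [Nonempty ι]
    [ConditionallyCompleteLinearOrder L] [TopologicalSpace L] [OrderTopology L] {l : Filter α}
    {f : ι → α → L} {g : ι → L} (h : ∀ i, Tendsto (f i) l (𝓝 (g i))) :
    Tendsto (fun x => ⨆ i, f i x) l (𝓝 (⨆ i, g i)) := by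
  cases nonempty_fintype ι
  simpa only [← Finset.sup'_univ_eq_ciSup] using
    Tendsto.finset_sup'_nhds_apply Finset.univ_nonempty fun i _ => h i

lemma exists_forall_of_eventually_nhdsLT_one {q : ℝ → Prop} (h : ∀ᶠ γ in 𝓝[<] (1 : ℝ), q γ) :
    ∃ γ' : ℝ, 0 < γ' ∧ γ' < 1 ∧ ∀ γ, γ' < γ → γ < 1 → q γ := by
  obtain ⟨l, hl, hsub⟩ := mem_nhdsLT_iff_exists_Ioo_subset.1 h
  exact ⟨max l (1 / 2), by positivity, max_lt hl (by norm_num),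
    fun γ hγ hγ₁ => hsub ⟨(le_max_left _ _).trans_lt hγ, hγ₁⟩⟩

namespace SafetyMDP

section Avoidance

variable [Fintype S] {Acc : Set S}

noncomputable def avoidStep (Acc : Set S) (p : S → PMF S) (f : S → ℝ≥0∞) (s : S) : ℝ≥0∞ :=
  if s ∈ Acc then 0 else ∑ s', p s s' * f s'

noncomputable def avoidSum (Acc : Set S) (p : S → PMF S) (n : ℕ) (s : S) : ℝ≥0∞ :=
  ∑ x : Fin (n + 1) → S,
    if x 0 = s ∧ ∀ i, x i ∉ Acc then ∏ i : Fin n, p (x i.castSucc) (x i.succ) else 0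

lemma avoidSum_zero (p : S → PMF S) (s : S) : avoidSum Acc p 0 s = if s ∈ Acc then 0 else 1 := by
  rw [avoidSum, ← (Equiv.funUnique (Fin 1) S).symm.sum_comp]
  simp [ite_and, eq_comm (b := s)]

lemma avoidSum_succ (p : S → PMF S) (n : ℕ) (s : S) :
    avoidSum Acc p (n + 1) s = avoidStep Acc p (avoidSum Acc p n) s := by
  rw [avoidSum, ← (Fin.consEquiv fun _ => S).sum_comp, Fintype.sum_prod_type, Finset.sum_comm]
  simp only [Fin.consEquiv_apply, Fin.forall_fin_succ (n := n + 1), Fin.cons_zero, Fin.cons_succ,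
    Fin.prod_univ_succ, Fin.castSucc_zero, ← Fin.succ_castSucc]
  by_cases hs : s ∈ Acc
  · simp [avoidStep, hs]
  · simp only [avoidStep, avoidSum, hs, if_false, Finset.mul_sum, mul_ite, mul_zero]
    conv_rhs => rw [Finset.sum_comm]
    simp [ite_and, hs]

lemma avoidSum_eq_iterate (p : S → PMF S) (n : ℕ) :
    avoidSum Acc p n = (avoidStep Acc p)^[n + 1] 1 := by
  induction n with
  | zero =>
    funext s
    simp [avoidSum_zero, avoidStep, PMF.sum_coe_eq_one]
  | succ n ih =>
    funext s
    rw [avoidSum_succ, ih, iterate_succ_apply' _ (n + 1)]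

end Avoidance

section PathMeasure

variable [MeasurableSpace S] {Acc : Set S} {p : S → PMF S} {ν : S → Measure (ℕ → S)}

def pathPrefix (n : ℕ) (ω : ℕ → S) : Fin (n + 1) → S := fun i => ω i

lemma measurable_pathPrefix (n : ℕ) : Measurable (pathPrefix (S := S) n) :=
  measurable_pi_lambda _ fun i => measurable_pi_apply (i : ℕ)

lemma measure_pathPrefix_preimage (hν : IsPathMeasure p ν) (s : S) (n : ℕ)
    (x : Fin (n + 1) → S) :
    ν s (pathPrefix n ⁻¹' {x}) =
      if x 0 = s then ∏ i : Fin n, p (x i.castSucc) (x i.succ) else 0 := by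
  set x' : ℕ → S := fun i => x ⟨min i n, by omega⟩
  have hset : pathPrefix n ⁻¹' {x} = {ω | ∀ i ≤ n, ω i = x' i} := by
    ext ω
    simp only [mem_preimage, mem_singleton_iff, funext_iff, pathPrefix, Fin.forall_iff, x',
      mem_ofPred_eq]
    refine forall_congr' fun i => ⟨fun h hi => ?_, fun h hi => ?_⟩
    · simpa [min_eq_left hi] using h (by omega)
    · simpa [min_eq_left (Nat.le_of_lt_succ hi)] using h (Nat.le_of_lt_succ hi)
  rw [hset, hν.2, ← Fin.prod_univ_eq_prod_range (fun i => p (x' i) (x' (i + 1)))]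
  have hx'0 : x' 0 = x 0 := by simp [x']
  have hprod : ∀ i : Fin n, p (x' i) (x' (i + 1)) = p (x i.castSucc) (x i.succ) := by
    intro i
    simp only [x', min_eq_left i.is_lt.le, min_eq_left (Nat.succ_le_of_lt i.is_lt)]
    rfl
  simp only [hx'0, hprod, ite_mul, one_mul, zero_mul]

variable [Fintype S]

lemma measure_pathPrefix_preimage_eq_zero (hν : IsPathMeasure p ν) (s : S) {n : ℕ}
    {T : Set (Fin (n + 1) → S)}
    (hT : ∀ x ∈ T, x 0 = s → ∃ i : Fin n, p (x i.castSucc) (x i.succ) = 0) :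
    ν s (pathPrefix n ⁻¹' T) = 0 := by
  refine (measure_preimage_eq_zero_iff_of_countable T.to_countable).2 fun x hx => ?_
  rw [measure_pathPrefix_preimage hν]
  split_ifs with h0
  · obtain ⟨i, hi⟩ := hT x hx h0
    exact Finset.prod_eq_zero (Finset.mem_univ i) hi
  · rfl

lemma ae_start (hν : IsPathMeasure p ν) (s : S) : ∀ᵐ ω ∂ν s, ω 0 = s :=
  measure_pathPrefix_preimage_eq_zero (n := 0) (T := {x | x 0 ≠ s}) hν s fun _ hx h0 => (hx h0).elim

lemma ae_absorbing (hν : IsPathMeasure p ν) (habs : ∀ u ∈ Acc, (p u).support ⊆ Acc) (s : S) :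
    ∀ᵐ ω ∂ν s, ∀ t, ω t ∈ Acc → ω (t + 1) ∈ Acc := by
  refine ae_all_iff.2 fun t => ?_
  refine measure_pathPrefix_preimage_eq_zero (n := t + 1)
    (T := {x | ¬(x (Fin.last t).castSucc ∈ Acc → x (Fin.last t).succ ∈ Acc)}) hν s
    fun x hx _ => ⟨Fin.last t, ?_⟩
  simp only [mem_ofPred_eq, Classical.not_imp] at hx
  exact (p _).apply_eq_zero_iff _ |>.2 fun h => hx.2 (habs _ hx.1 h)

lemma measure_safe_eq_zero_of_mem (hν : IsPathMeasure p ν) {s : S} (hs : s ∈ Acc) :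
    ν s {ω | ∀ t, ω t ∉ Acc} = 0 :=
  measure_mono_null (fun ω hω (h0 : ω 0 = s) => hω 0 (h0 ▸ hs)) (ae_start hν s)

variable [MeasurableSingletonClass S]

lemma measure_avoid_eq_iterate (hν : IsPathMeasure p ν) (s : S) (n : ℕ) :
    ν s {ω | ∀ t < n, ω t ∉ Acc} = (avoidStep Acc p)^[n] 1 s := by
  have := hν.1 s
  cases n with
  | zero => simp
  | succ n =>
    have hset : {ω : ℕ → S | ∀ t < n + 1, ω t ∉ Acc} =
        pathPrefix n ⁻¹' ↑(Finset.univ.filter fun x : Fin (n + 1) → S => ∀ i, x i ∉ Acc) := by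
      ext ω
      simp [pathPrefix, Fin.forall_iff]
    rw [hset, ← sum_measure_preimage_singleton _ fun x _ =>
      measurable_pathPrefix n (measurableSet_singleton x), ← avoidSum_eq_iterate, avoidSum,
      Finset.sum_filter]
    refine Finset.sum_congr rfl fun x _ => ?_
    rw [measure_pathPrefix_preimage hν]
    split_ifs <;> simp_all

lemma measure_safe_eq_iInf (hν : IsPathMeasure p ν) (s : S) :
    ν s {ω | ∀ t, ω t ∉ Acc} = ⨅ n, (avoidStep Acc p)^[n] 1 s := by
  have hset : {ω : ℕ → S | ∀ t, ω t ∉ Acc} = ⋂ n, {ω | ∀ t < n, ω t ∉ Acc} := by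
    ext ω
    simp only [mem_iInter, mem_ofPred_eq]
    exact ⟨fun h n t _ => h t, fun h t => h (t + 1) t t.lt_succ_self⟩
  have := hν.1 s
  have hanti : Antitone fun n : ℕ => {ω : ℕ → S | ∀ t < n, ω t ∉ Acc} :=
    fun m n hmn ω h t ht => h t (ht.trans_le hmn)
  rw [hset, hanti.measure_iInter (fun n => by measurability) ⟨0, measure_ne_top _ _⟩]
  exact iInf_congr (measure_avoid_eq_iterate hν s)

end PathMeasure

section Bellman

variable [Fintype S] {Acc : Set S} {P : (s : S) → A s → PMF S}

noncomputable def bellman (Acc : Set S) (P : (s : S) → A s → PMF S) (f : S → ℝ≥0∞) (s : S) :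
    ℝ≥0∞ :=
  if s ∈ Acc then 0 else ⨆ a, ∑ s', P s a s' * f s'

noncomputable def optSafe (Acc : Set S) (P : (s : S) → A s → PMF S) (s : S) : ℝ≥0∞ :=
  ⨅ n, (bellman Acc P)^[n] 1 s

lemma monotone_bellman : Monotone (bellman Acc P) := fun f g hfg s => by
  unfold bellman
  split_ifs
  · rfl
  · gcongr with a s'
    exact hfg s'

lemma bellman_le_one {f : S → ℝ≥0∞} (hf : f ≤ 1) : bellman Acc P f ≤ 1 := by
  intro s
  unfold bellman
  split_ifs
  · exact zero_le_one
  · exact iSup_le fun a => (P s a).sum_mul_le_one hf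

lemma antitone_iterate_bellman : Antitone fun n => (bellman Acc P)^[n] 1 :=
  monotone_bellman.antitone_iterate_of_map_le (bellman_le_one le_rfl)

lemma optSafe_le_one : optSafe Acc P ≤ 1 := fun _ => iInf_le_of_le 0 le_rfl

lemma optSafe_eq_zero_of_mem {s : S} (hs : s ∈ Acc) : optSafe Acc P s = 0 :=
  le_antisymm (iInf_le_of_le 1 (by simp [bellman, hs])) bot_le

lemma sum_mul_optSafe_ne_top (q : PMF S) : ∑ s, q s * optSafe Acc P s ≠ ⊤ :=
  ne_top_of_le_ne_top ENNReal.one_ne_top (q.sum_mul_le_one optSafe_le_one)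

lemma tendsto_iterate_bellman (s : S) :
    Tendsto (fun n => (bellman Acc P)^[n] 1 s) atTop (𝓝 (optSafe Acc P s)) :=
  tendsto_atTop_iInf fun _ _ hmn => antitone_iterate_bellman hmn s

variable [∀ s, Finite (A s)] [∀ s, Nonempty (A s)]

lemma tendsto_bellman {α : Type*} {l : Filter α} {f : α → S → ℝ≥0∞} {g : S → ℝ≥0∞}
    (h : ∀ s, Tendsto (fun x => f x s) l (𝓝 (g s))) (s : S) :
    Tendsto (fun x => bellman Acc P (f x) s) l (𝓝 (bellman Acc P g s)) := by
  unfold bellman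
  split_ifs
  · exact tendsto_const_nhds
  · refine tendsto_ciSup_of_finite fun a => tendsto_finsetSum _ fun s' _ => ?_
    exact ENNReal.Tendsto.const_mul (h s') (Or.inr (PMF.apply_ne_top _ _))

lemma bellman_optSafe : bellman Acc P (optSafe Acc P) = optSafe Acc P := by
  funext s
  refine tendsto_nhds_unique (tendsto_bellman tendsto_iterate_bellman s) ?_
  have := (tendsto_iterate_bellman (Acc := Acc) (P := P) s).comp (tendsto_add_atTop_nat 1)
  simpa only [comp_def, iterate_succ_apply'] using this

lemma optSafe_eq_sum_of_forall_le {s : S} (hs : s ∉ Acc) {a : A s}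
    (ha : ∀ b, ∑ s', P s b s' * optSafe Acc P s' ≤ ∑ s', P s a s' * optSafe Acc P s') :
    optSafe Acc P s = ∑ s', P s a s' * optSafe Acc P s' := by
  conv_lhs => rw [← bellman_optSafe, bellman, if_neg hs]
  exact le_antisymm (iSup_le ha) (le_iSup_of_le a le_rfl)

lemma exists_forall_sum_optSafe_le (s : S) :
    ∃ a : A s, ∀ b, ∑ s', P s b s' * optSafe Acc P s' ≤ ∑ s', P s a s' * optSafe Acc P s' :=
  Finite.exists_max _

end Bellman

section Comparison

variable [Fintype S] {Acc : Set S} {P : (s : S) → A s → PMF S} {κ : S → PMF S}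

lemma monotone_avoidStep : Monotone (avoidStep Acc κ) := fun f g hfg s => by
  unfold avoidStep
  split_ifs
  · rfl
  · gcongr with s'
    exact hfg s'

lemma avoidStep_le_one {f : S → ℝ≥0∞} (hf : f ≤ 1) : avoidStep Acc κ f ≤ 1 := by
  intro s
  unfold avoidStep
  split_ifs
  · exact zero_le_one
  · exact (κ s).sum_mul_le_one hf

lemma le_iterate_avoidStep {g : S → ℝ≥0∞} (hg1 : g ≤ 1) (hg : g ≤ avoidStep Acc κ g) (n : ℕ) :
    g ≤ (avoidStep Acc κ)^[n] 1 :=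
  (monotone_avoidStep.monotone_iterate_of_le_map hg (Nat.zero_le n)).trans
    (monotone_avoidStep.iterate n hg1)

lemma iterate_avoidStep_le_one (n : ℕ) : (avoidStep Acc κ)^[n] 1 ≤ 1 :=
  monotone_avoidStep.antitone_iterate_of_map_le (avoidStep_le_one le_rfl) (Nat.zero_le n)

lemma avoidStep_le_bellman {u : S} {a : A u} (ha : κ u = P u a) (f : S → ℝ≥0∞) :
    avoidStep Acc κ f u ≤ bellman Acc P f u := by
  unfold avoidStep bellman
  split_ifs
  · rfl
  · exact le_iSup_of_le a (by rw [ha])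

lemma iterate_avoidStep_le_iterate_bellman (hκ : ∀ u, optSafe Acc P u = 1 ∨ ∃ a, κ u = P u a)
    (n : ℕ) : (avoidStep Acc κ)^[n] 1 ≤ (bellman Acc P)^[n] 1 := by
  induction n with
  | zero => exact le_rfl
  | succ n ih =>
    intro u
    rcases hκ u with hu | ⟨a, ha⟩
    · calc (avoidStep Acc κ)^[n + 1] 1 u ≤ 1 := iterate_avoidStep_le_one (n + 1) u
        _ = optSafe Acc P u := hu.symm
        _ ≤ (bellman Acc P)^[n + 1] 1 u := iInf_le _ (n + 1)
    · rw [iterate_succ_apply', iterate_succ_apply']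
      exact (monotone_avoidStep ih u).trans (avoidStep_le_bellman ha _)

end Comparison

section SafetyProbability

variable [Fintype S] [MeasurableSpace S] [MeasurableSingletonClass S] {Acc : Set S}
  {P : (s : S) → A s → PMF S} {κ : S → PMF S} {ν : S → Measure (ℕ → S)}

lemma measure_safe_le_optSafe (hν : IsPathMeasure κ ν)
    (hκ : ∀ u, optSafe Acc P u = 1 ∨ ∃ a, κ u = P u a) (s : S) :
    ν s {ω | ∀ t, ω t ∉ Acc} ≤ optSafe Acc P s := by
  rw [measure_safe_eq_iInf hν]
  exact iInf_mono fun n => iterate_avoidStep_le_iterate_bellman hκ n s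

lemma optSafe_le_measure_safe (hν : IsPathMeasure κ ν)
    (hκ : ∀ u ∉ Acc, optSafe Acc P u ≤ ∑ s', κ u s' * optSafe Acc P s') (s : S) :
    optSafe Acc P s ≤ ν s {ω | ∀ t, ω t ∉ Acc} := by
  rw [measure_safe_eq_iInf hν]
  refine le_iInf fun n => le_iterate_avoidStep optSafe_le_one (fun u => ?_) n s
  unfold avoidStep
  split_ifs with hu
  · exact (optSafe_eq_zero_of_mem hu).le
  · exact hκ u hu

variable [∀ s, Finite (A s)] [∀ s, Nonempty (A s)] {μ : ((s : S) → A s) → S → Measure (ℕ → S)}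

lemma exists_policy_measure_safe_eq_optSafe
    (hμ : ∀ π : (s : S) → A s, IsPathMeasure (fun s => P s (π s)) (μ π)) :
    ∃ π : (s : S) → A s, ∀ s, μ π s {ω | ∀ t, ω t ∉ Acc} = optSafe Acc P s := by
  choose π hπ using exists_forall_sum_optSafe_le (Acc := Acc) (P := P)
  exact ⟨π, fun s => le_antisymm (measure_safe_le_optSafe (hμ π) (fun u => .inr ⟨π u, rfl⟩) s)
    (optSafe_le_measure_safe (hμ π) (fun u hu => (optSafe_eq_sum_of_forall_le hu (hπ u)).le) s)⟩

lemma iSup_measure_safe_eq_optSafe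
    (hμ : ∀ π : (s : S) → A s, IsPathMeasure (fun s => P s (π s)) (μ π)) (s : S) :
    ⨆ π : (s : S) → A s, μ π s {ω | ∀ t, ω t ∉ Acc} = optSafe Acc P s := by
  obtain ⟨π₀, hπ₀⟩ := exists_policy_measure_safe_eq_optSafe hμ
  exact le_antisymm (iSup_le fun π => measure_safe_le_optSafe (hμ π) (fun u => .inr ⟨π u, rfl⟩) s)
    (le_iSup_of_le π₀ (hπ₀ s).ge)

lemma mem_winRegion_iff (hμ : ∀ π : (s : S) → A s, IsPathMeasure (fun s => P s (π s)) (μ π))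
    {s : S} : s ∈ WinRegion Acc μ ↔ optSafe Acc P s = 1 := by
  refine ⟨fun ⟨π, hπ⟩ => le_antisymm (optSafe_le_one s) ?_, fun h => ?_⟩
  · exact hπ ▸ measure_safe_le_optSafe (hμ π) (fun u => .inr ⟨π u, rfl⟩) s
  · obtain ⟨π₀, hπ₀⟩ := exists_policy_measure_safe_eq_optSafe hμ
    exact ⟨π₀, (hπ₀ s).trans h⟩

end SafetyProbability

section Return

variable {Acc : Set S} {γacc γ rn : ℝ} {ω : ℕ → S}

lemma Rw_nonpos (hacc : γacc ≤ 1) (hrn : rn ≤ 0) (s : S) : Rw Acc γacc rn s ≤ 0 := by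
  unfold Rw
  split_ifs
  · exact mul_nonpos_of_nonneg_of_nonpos (by linarith) hrn
  · rfl

lemma Γw_nonneg (hacc : 0 ≤ γacc) (hγ : 0 ≤ γ) (s : S) : 0 ≤ Γw Acc γacc γ s := by
  unfold Γw
  split_ifs <;> assumption

lemma Ret_nonpos (hacc₀ : 0 ≤ γacc) (hacc₁ : γacc ≤ 1) (hγ : 0 ≤ γ) (hrn : rn ≤ 0)
    (ω : ℕ → S) : Ret Acc γacc γ rn ω ≤ 0 :=
  tsum_nonpos fun _ => mul_nonpos_of_nonpos_of_nonneg (Rw_nonpos hacc₁ hrn _)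
    (Finset.prod_nonneg fun _ _ => Γw_nonneg hacc₀ hγ _)

lemma Ret_eq_zero_of_safe (h : ∀ t, ω t ∉ Acc) : Ret Acc γacc γ rn ω = 0 := by
  simp [Ret, Rw, h]

/-- The factor `1 - γacc` in `Rw` normalises the geometric series collected after the first
entrance into `Acc`. -/
lemma Ret_eq_of_first_hit (hacc₀ : 0 ≤ γacc) (hacc₁ : γacc < 1)
    (habs : ∀ t, ω t ∈ Acc → ω (t + 1) ∈ Acc) {n : ℕ} (hn : ω (n + 1) ∈ Acc)
    (hlt : ∀ k < n, ω (k + 1) ∉ Acc) : Ret Acc γacc γ rn ω = rn * γ ^ n := by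
  have hin : ∀ j, ω (j + n + 1) ∈ Acc := by
    intro j
    induction j with
    | zero => simpa using hn
    | succ j ih => simpa [add_right_comm j 1 n] using habs _ ih
  set f : ℕ → ℝ := fun t => Rw Acc γacc rn (ω (t + 1)) *
    ∏ k ∈ Finset.range t, Γw Acc γacc γ (ω (k + 1))
  have htail : ∀ j, f (j + n) = (1 - γacc) * rn * γ ^ n * γacc ^ j := by
    intro j
    simp only [f, add_comm j n, Finset.prod_range_add, Rw, Γw]
    rw [if_pos (by simpa [add_comm] using hin j),
      Finset.prod_congr rfl fun k hk => if_neg (hlt k (Finset.mem_range.1 hk)),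
      Finset.prod_congr rfl fun k _ => if_pos (by simpa [add_assoc, add_comm] using hin k)]
    simp only [Finset.prod_const, Finset.card_range]
    ring
  have hhead : ∑ t ∈ Finset.range n, f t = 0 :=
    Finset.sum_eq_zero fun t ht => by simp [f, Rw, hlt t (Finset.mem_range.1 ht)]
  have hsum := (hasSum_geometric_of_lt_one hacc₀ hacc₁).mul_left ((1 - γacc) * rn * γ ^ n)
  rw [← funext htail, hasSum_nat_add_iff (f := f), hhead, add_zero] at hsum
  rw [Ret, hsum.tsum_eq]
  field_simp [sub_ne_zero.2 hacc₁.ne']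

lemma exists_forall_Ret_eq (hacc₀ : 0 ≤ γacc) (hacc₁ : γacc < 1)
    (habs : ∀ t, ω t ∈ Acc → ω (t + 1) ∈ Acc) :
    ∃ n, ∀ γ, Ret Acc γacc γ rn ω = if ∀ t, ω t ∉ Acc then 0 else rn * γ ^ n := by
  by_cases hsafe : ∀ t, ω t ∉ Acc
  · exact ⟨0, fun γ => by rw [if_pos hsafe, Ret_eq_zero_of_safe hsafe]⟩
  · have hhit : ∃ t, ω (t + 1) ∈ Acc := (not_forall_not.1 hsafe).imp habs
    refine ⟨Nat.find hhit, fun γ => ?_⟩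
    rw [if_neg hsafe]
    exact Ret_eq_of_first_hit hacc₀ hacc₁ habs (Nat.find_spec hhit) fun k hk => Nat.find_min hhit hk

lemma summable_Ret (hacc₀ : 0 ≤ γacc) (hacc₁ : γacc < 1) (hγ₀ : 0 ≤ γ) (hγ₁ : γ < 1)
    (ω : ℕ → S) :
    Summable fun t =>
      Rw Acc γacc rn (ω (t + 1)) * ∏ k ∈ Finset.range t, Γw Acc γacc γ (ω (k + 1)) := by
  refine Summable.of_norm_bounded ((summable_geometric_of_lt_one (le_max_of_le_left hacc₀)
    (max_lt hacc₁ hγ₁)).mul_left |rn|) fun t => ?_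
  have hRw : |Rw Acc γacc rn (ω (t + 1))| ≤ |rn| := by
    unfold Rw
    split_ifs
    · rw [abs_mul, abs_of_nonneg (by linarith : (0 : ℝ) ≤ 1 - γacc)]
      exact mul_le_of_le_one_left (abs_nonneg _) (by linarith)
    · simp
  have hΓw : ∀ k, |Γw Acc γacc γ (ω (k + 1))| ≤ max γacc γ := fun k => by
    unfold Γw
    split_ifs
    · exact (abs_of_nonneg hacc₀).trans_le (le_max_left _ _)
    · exact (abs_of_nonneg hγ₀).trans_le (le_max_right _ _)
  rw [Real.norm_eq_abs, abs_mul, Finset.abs_prod]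
  gcongr
  exact (Finset.prod_le_prod (fun _ _ => abs_nonneg _) fun k _ => hΓw k).trans_eq (by simp)

lemma Rw_add_Γw_mul_eq_zero_iff (hacc₀ : 0 ≤ γacc) (hacc₁ : γacc < 1) (hγ : 0 < γ)
    (hrn : rn < 0) {v : ℝ} (hv : v ≤ 0) (s : S) :
    Rw Acc γacc rn s + Γw Acc γacc γ s * v = 0 ↔ s ∉ Acc ∧ v = 0 := by
  unfold Rw Γw
  split_ifs with hs
  · refine ⟨fun h => ?_, fun h => (h.1 hs).elim⟩
    nlinarith [mul_pos (sub_pos.2 hacc₁) (neg_pos.2 hrn), mul_nonneg hacc₀ (neg_nonneg.2 hv)]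
  · simp [hs, hγ.ne']

lemma Rw_add_Γw_mul_nonpos (hacc₀ : 0 ≤ γacc) (hacc₁ : γacc ≤ 1) (hγ : 0 ≤ γ)
    (hrn : rn ≤ 0) {v : ℝ} (hv : v ≤ 0) (s : S) :
    Rw Acc γacc rn s + Γw Acc γacc γ s * v ≤ 0 :=
  add_nonpos (Rw_nonpos hacc₁ hrn s) (mul_nonpos_of_nonneg_of_nonpos (Γw_nonneg hacc₀ hγ s) hv)

end Return

section Value

variable [Fintype S] [MeasurableSpace S]
  {Acc : Set S} {p : S → PMF S} {ν : S → Measure (ℕ → S)} {γacc γ rn : ℝ}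

lemma ae_forall_Ret_eq (hν : IsPathMeasure p ν) (habs : ∀ u ∈ Acc, (p u).support ⊆ Acc)
    (hacc₀ : 0 ≤ γacc) (hacc₁ : γacc < 1) (s : S) :
    ∀ᵐ ω ∂ν s, ∃ n, ∀ γ, Ret Acc γacc γ rn ω = if ∀ t, ω t ∉ Acc then 0 else rn * γ ^ n :=
  (ae_absorbing hν habs s).mono fun _ hω => exists_forall_Ret_eq hacc₀ hacc₁ hω

lemma ae_norm_Ret_le (hν : IsPathMeasure p ν) (habs : ∀ u ∈ Acc, (p u).support ⊆ Acc)
    (hacc₀ : 0 ≤ γacc) (hacc₁ : γacc < 1) (hγ₀ : 0 ≤ γ) (hγ₁ : γ ≤ 1) (s : S) :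
    ∀ᵐ ω ∂ν s, ‖Ret Acc γacc γ rn ω‖ ≤ |rn| := by
  filter_upwards [ae_forall_Ret_eq (rn := rn) hν habs hacc₀ hacc₁ s] with ω ⟨n, hn⟩
  rw [hn, Real.norm_eq_abs]
  split_ifs
  · simp
  · rw [abs_mul, abs_of_nonneg (pow_nonneg hγ₀ n)]
    exact mul_le_of_le_one_right (abs_nonneg _) (pow_le_one₀ hγ₀ hγ₁)

variable [MeasurableSingletonClass S]

lemma measurable_Ret (hacc₀ : 0 ≤ γacc) (hacc₁ : γacc < 1) (hγ₀ : 0 ≤ γ) (hγ₁ : γ < 1) :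
    Measurable (Ret Acc γacc γ rn : (ℕ → S) → ℝ) := by
  refine measurable_of_tendsto_metrizable (fun n => Finset.measurable_sum _ fun t _ => ?_)
    (tendsto_pi_nhds.2 fun ω => (summable_Ret hacc₀ hacc₁ hγ₀ hγ₁ ω).hasSum.tendsto_sum_nat)
  exact ((measurable_of_countable (Rw Acc γacc rn)).comp (measurable_pi_apply _)).mul
    (Finset.measurable_prod _ fun k _ =>
      (measurable_of_countable (Γw Acc γacc γ)).comp (measurable_pi_apply _))

lemma integrable_Ret (hν : IsPathMeasure p ν) (habs : ∀ u ∈ Acc, (p u).support ⊆ Acc)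
    (hacc₀ : 0 ≤ γacc) (hacc₁ : γacc < 1) (hγ₀ : 0 ≤ γ) (hγ₁ : γ < 1) (s : S) :
    Integrable (Ret Acc γacc γ rn) (ν s) :=
  have := hν.1 s
  (integrable_const |rn|).mono' (measurable_Ret hacc₀ hacc₁ hγ₀ hγ₁).aestronglyMeasurable
    (ae_norm_Ret_le hν habs hacc₀ hacc₁ hγ₀ hγ₁.le s)

lemma integral_Ret_eq_zero_iff (hν : IsPathMeasure p ν)
    (habs : ∀ u ∈ Acc, (p u).support ⊆ Acc) (hacc₀ : 0 ≤ γacc) (hacc₁ : γacc < 1)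
    (hγ₀ : 0 < γ) (hγ₁ : γ < 1) (hrn : rn < 0) (s : S) :
    ∫ ω, Ret Acc γacc γ rn ω ∂ν s = 0 ↔ ν s {ω | ∀ t, ω t ∉ Acc} = 1 := by
  have := hν.1 s
  rw [← neg_eq_zero, ← integral_neg, integral_eq_zero_iff_of_nonneg
      (fun ω => neg_nonneg.2 (Ret_nonpos hacc₀ hacc₁.le hγ₀.le hrn.le ω))
      (integrable_Ret hν habs hacc₀ hacc₁ hγ₀.le hγ₁ s).neg,
    ← measure_univ (μ := ν s), ← ae_iff_measure_eq (by measurability)]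
  refine ⟨fun h => ?_, fun h => ?_⟩ <;>
    filter_upwards [h, ae_forall_Ret_eq (rn := rn) hν habs hacc₀ hacc₁ s] with ω hω ⟨n, hn⟩
  · by_contra hsafe
    simp only [Pi.zero_apply, neg_eq_zero, hn, if_neg hsafe] at hω
    exact mul_ne_zero hrn.ne (pow_ne_zero n hγ₀.ne') hω
  · simp [Ret_eq_zero_of_safe hω]

lemma tendsto_integral_Ret (hν : IsPathMeasure p ν) (habs : ∀ u ∈ Acc, (p u).support ⊆ Acc)
    (hacc₀ : 0 ≤ γacc) (hacc₁ : γacc < 1) (s : S) :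
    Tendsto (fun γ => ∫ ω, Ret Acc γacc γ rn ω ∂ν s) (𝓝[<] 1)
      (𝓝 (rn * (1 - (ν s {ω | ∀ t, ω t ∉ Acc}).toReal))) := by
  have := hν.1 s
  have hsafe : MeasurableSet {ω : ℕ → S | ∀ t, ω t ∉ Acc} := by measurability
  have hγ : ∀ᶠ γ in 𝓝[<] (1 : ℝ), γ ∈ Ioo 0 1 := Ioo_mem_nhdsLT one_pos
  have hpt : ∀ᵐ ω ∂ν s, Tendsto (fun γ => Ret Acc γacc γ rn ω) (𝓝[<] 1)
      (𝓝 ({ω : ℕ → S | ∀ t, ω t ∉ Acc}ᶜ.indicator (fun _ => rn) ω)) := by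
    filter_upwards [ae_forall_Ret_eq (rn := rn) hν habs hacc₀ hacc₁ s] with ω ⟨n, hn⟩
    simp only [hn]
    split_ifs with h
    · rw [indicator_of_notMem (not_not_intro h)]
      exact tendsto_const_nhds
    · rw [indicator_of_mem h]
      have : Tendsto (fun γ : ℝ => rn * γ ^ n) (𝓝 1) (𝓝 rn) := by
        simpa using ((continuous_pow n).tendsto 1).const_mul rn
      exact this.mono_left nhdsWithin_le_nhds
  have hlim := tendsto_integral_filter_of_dominated_convergence (fun _ => |rn|)
    (hγ.mono fun γ hγ => (measurable_Ret hacc₀ hacc₁ hγ.1.le hγ.2).aestronglyMeasurable)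
    (hγ.mono fun γ hγ => ae_norm_Ret_le hν habs hacc₀ hacc₁ hγ.1.le hγ.2.le s)
    (integrable_const _) hpt
  rwa [integral_indicator_const _ hsafe.compl, probReal_compl_eq_one_sub hsafe, smul_eq_mul,
    mul_comm, measureReal_def] at hlim

end Value

section QValue

variable [MeasurableSpace S] {P : (s : S) → A s → PMF S}
  {Acc : Set S} {μ : ((s : S) → A s) → S → Measure (ℕ → S)} {γacc γ rn : ℝ}

lemma Valp_nonpos (hacc₀ : 0 ≤ γacc) (hacc₁ : γacc ≤ 1) (hγ : 0 ≤ γ) (hrn : rn ≤ 0)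
    (π : (s : S) → A s) (s : S) : Valp Acc γacc γ rn μ π s ≤ 0 :=
  integral_nonpos (Ret_nonpos hacc₀ hacc₁ hγ hrn)

variable [Fintype S]

lemma Qp_nonpos (hacc₀ : 0 ≤ γacc) (hacc₁ : γacc ≤ 1) (hγ : 0 ≤ γ) (hrn : rn ≤ 0)
    (π : (s : S) → A s) (s : S) (a : A s) : Qp P Acc γacc γ rn μ π s a ≤ 0 :=
  Finset.sum_nonpos fun s' _ => mul_nonpos_of_nonneg_of_nonpos ENNReal.toReal_nonneg
    (Rw_add_Γw_mul_nonpos hacc₀ hacc₁ hγ hrn (Valp_nonpos hacc₀ hacc₁ hγ hrn π s') s')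

variable [MeasurableSingletonClass S]

lemma Qp_eq_zero_iff (hμ : ∀ π : (s : S) → A s, IsPathMeasure (fun s => P s (π s)) (μ π))
    (habs : ∀ s ∈ Acc, ∀ a : A s, (P s a).support ⊆ Acc) (hacc₀ : 0 ≤ γacc) (hacc₁ : γacc < 1)
    (hγ₀ : 0 < γ) (hγ₁ : γ < 1) (hrn : rn < 0) (π : (s : S) → A s) (s : S) (a : A s) :
    Qp P Acc γacc γ rn μ π s a = 0 ↔
      ∀ s' ∈ (P s a).support, s' ∉ Acc ∧ μ π s' {ω | ∀ t, ω t ∉ Acc} = 1 := by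
  have hV := Valp_nonpos (Acc := Acc) (μ := μ) hacc₀ hacc₁.le hγ₀.le hrn.le π
  rw [Qp, Finset.sum_eq_zero_iff_of_nonpos fun s' _ => mul_nonpos_of_nonneg_of_nonpos
    ENNReal.toReal_nonneg (Rw_add_Γw_mul_nonpos hacc₀ hacc₁.le hγ₀.le hrn.le (hV s') s')]
  refine forall_congr' fun s' => ?_
  rw [PMF.mem_support_iff, mul_eq_zero, ENNReal.toReal_eq_zero_iff, or_iff_not_imp_left,
    Rw_add_Γw_mul_eq_zero_iff hacc₀ hacc₁ hγ₀ hrn (hV s'), Valp,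
    integral_Ret_eq_zero_iff (hμ π) (fun u hu => habs u hu (π u)) hacc₀ hacc₁ hγ₀ hγ₁ hrn]
  simp [Finset.mem_univ, PMF.apply_ne_top]

lemma tendsto_Qp_summand (hμ : ∀ π : (s : S) → A s, IsPathMeasure (fun s => P s (π s)) (μ π))
    (habs : ∀ s ∈ Acc, ∀ a : A s, (P s a).support ⊆ Acc) (hacc₀ : 0 ≤ γacc) (hacc₁ : γacc < 1)
    (π : (s : S) → A s) (s : S) :
    Tendsto (fun γ => Rw Acc γacc rn s + Γw Acc γacc γ s * Valp Acc γacc γ rn μ π s) (𝓝[<] 1)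
      (𝓝 (rn * (1 - (μ π s {ω | ∀ t, ω t ∉ Acc}).toReal))) := by
  have hV := tendsto_integral_Ret (rn := rn) (hμ π) (fun u hu => habs u hu (π u)) hacc₀ hacc₁ s
  unfold Valp Rw Γw
  split_ifs with hs
  · rw [measure_safe_eq_zero_of_mem (hμ π) hs] at hV ⊢
    convert (hV.const_mul γacc).const_add ((1 - γacc) * rn) using 2
    simp only [ENNReal.toReal_zero, sub_zero]
    ring
  · convert ((tendsto_nhdsWithin_of_tendsto_nhds tendsto_id).mul hV).const_add 0 using 2
    · simp
    · ring

variable [∀ s, Finite (A s)] [∀ s, Nonempty (A s)]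

lemma Qstar_eq_zero_iff (hμ : ∀ π : (s : S) → A s, IsPathMeasure (fun s => P s (π s)) (μ π))
    (habs : ∀ s ∈ Acc, ∀ a : A s, (P s a).support ⊆ Acc) (hacc₀ : 0 ≤ γacc) (hacc₁ : γacc < 1)
    (hγ₀ : 0 < γ) (hγ₁ : γ < 1) (hrn : rn < 0) (s : S) (a : A s) :
    Qstar P Acc γacc γ rn μ s a = 0 ↔ (P s a).support ⊆ WinRegion Acc μ := by
  refine ⟨fun h s' hs' => ?_, fun hW => ?_⟩
  · obtain ⟨π, hπ⟩ := exists_eq_ciSup_of_finite (f := fun π => Qp P Acc γacc γ rn μ π s a)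
    exact ⟨π, ((Qp_eq_zero_iff hμ habs hacc₀ hacc₁ hγ₀ hγ₁ hrn π s a).1 (hπ.trans h) s' hs').2⟩
  · obtain ⟨π₀, hπ₀⟩ := exists_policy_measure_safe_eq_optSafe hμ
    have hQ : Qp P Acc γacc γ rn μ π₀ s a = 0 := by
      refine (Qp_eq_zero_iff hμ habs hacc₀ hacc₁ hγ₀ hγ₁ hrn π₀ s a).2 fun s' hs' => ?_
      have h1 := (hπ₀ s').trans ((mem_winRegion_iff hμ).1 (hW hs'))
      exact ⟨fun hs'A => by simp [measure_safe_eq_zero_of_mem (hμ π₀) hs'A] at h1, h1⟩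
    refine le_antisymm (ciSup_le fun π => ?_)
      (hQ ▸ le_ciSup (Finite.bddAbove_range fun π => Qp P Acc γacc γ rn μ π s a) π₀)
    exact Qp_nonpos hacc₀ hacc₁.le hγ₀.le hrn.le π s a

lemma tendsto_Qstar (hμ : ∀ π : (s : S) → A s, IsPathMeasure (fun s => P s (π s)) (μ π))
    (habs : ∀ s ∈ Acc, ∀ a : A s, (P s a).support ⊆ Acc) (hacc₀ : 0 ≤ γacc) (hacc₁ : γacc < 1)
    (hrn : rn < 0) (s : S) (a : A s) :
    Tendsto (fun γ => Qstar P Acc γacc γ rn μ s a) (𝓝[<] 1)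
      (𝓝 (rn * (1 - (∑ s', P s a s' * optSafe Acc P s').toReal))) := by
  have hQp : ∀ π, Tendsto (fun γ => Qp P Acc γacc γ rn μ π s a) (𝓝[<] 1)
      (𝓝 (rn * (1 - (∑ s', P s a s' * μ π s' {ω | ∀ t, ω t ∉ Acc}).toReal))) := fun π => by
    have h := tendsto_finsetSum Finset.univ fun s' _ =>
      (tendsto_Qp_summand (rn := rn) hμ habs hacc₀ hacc₁ π s').const_mul (P s a s').toReal
    rwa [PMF.sum_toReal_mul_mul_one_sub _ fun s' => have := (hμ π).1 s'; prob_le_one] at h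
  obtain ⟨π₀, hπ₀⟩ := exists_policy_measure_safe_eq_optSafe (Acc := Acc) hμ
  have hsup : ⨆ π : (s : S) → A s,
      rn * (1 - (∑ s', P s a s' * μ π s' {ω | ∀ t, ω t ∉ Acc}).toReal) =
        rn * (1 - (∑ s', P s a s' * optSafe Acc P s').toReal) := by
    refine le_antisymm (ciSup_le fun π => mul_le_mul_of_nonpos_left ?_ hrn.le)
      (le_ciSup_of_le (Finite.bddAbove_range _) π₀ (le_of_eq ?_))
    · refine sub_le_sub_left (ENNReal.toReal_mono (sum_mul_optSafe_ne_top _) ?_) 1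
      gcongr with s'
      exact measure_safe_le_optSafe (hμ π) (fun u => .inr ⟨π u, rfl⟩) s'
    · simp only [hπ₀]
  rw [← hsup]
  exact tendsto_ciSup_of_finite hQp

lemma eventually_forall_sum_optSafe_le
    (hμ : ∀ π : (s : S) → A s, IsPathMeasure (fun s => P s (π s)) (μ π))
    (habs : ∀ s ∈ Acc, ∀ a : A s, (P s a).support ⊆ Acc) (hacc₀ : 0 ≤ γacc) (hacc₁ : γacc < 1)
    (hrn : rn < 0) :
    ∀ᶠ γ in 𝓝[<] (1 : ℝ), ∀ s (a : A s),
      (∀ b, Qstar P Acc γacc γ rn μ s b ≤ Qstar P Acc γacc γ rn μ s a) →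
        ∀ b, ∑ s', P s b s' * optSafe Acc P s' ≤ ∑ s', P s a s' * optSafe Acc P s' := by
  have key : ∀ s (a b : A s), ∀ᶠ γ in 𝓝[<] (1 : ℝ),
      ∑ s', P s a s' * optSafe Acc P s' < ∑ s', P s b s' * optSafe Acc P s' →
        Qstar P Acc γacc γ rn μ s a < Qstar P Acc γacc γ rn μ s b := by
    intro s a b
    by_cases h : ∑ s', P s a s' * optSafe Acc P s' < ∑ s', P s b s' * optSafe Acc P s'
    · have hlt := mul_lt_mul_of_neg_left
        (sub_lt_sub_left (ENNReal.toReal_strict_mono (sum_mul_optSafe_ne_top _) h) 1) hrn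
      exact ((tendsto_Qstar hμ habs hacc₀ hacc₁ hrn s a).eventually_lt
        (tendsto_Qstar hμ habs hacc₀ hacc₁ hrn s b) hlt).mono fun _ h' _ => h'
    · exact .of_forall fun _ h' => (h h').elim
  filter_upwards [eventually_all.2 fun s => eventually_all.2 fun a => eventually_all.2 (key s a)]
    with γ hγ s a ha b
  exact not_lt.1 fun h => (ha b).not_gt (hγ s a b h)

end QValue

end SafetyMDP

open SafetyMDP

theorem supervisor_kernel_attains_max_safety_prob_general
    [Fintype S] [MeasurableSpace S] [MeasurableSingletonClass S]
    [∀ s, Fintype (A s)] [∀ s, Nonempty (A s)]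
    (P : (s : S) → A s → PMF S) (Acc : Set S)
    (habs : ∀ s ∈ Acc, ∀ a : A s, (P s a).support ⊆ Acc)
    (μ : ((s : S) → A s) → S → Measure (ℕ → S))
    (hμ : ∀ π : (s : S) → A s, IsPathMeasure (fun s => P s (π s)) (μ π))
    (rn γacc : ℝ) (hrn : rn < 0) (hγacc : 0 < γacc ∧ γacc < 1) :
    ∃ γ' : ℝ, 0 < γ' ∧ γ' < 1 ∧ ∀ γ : ℝ, γ' < γ → γ < 1 →
      ∀ (κ : S → PMF S) (μκ : S → Measure (ℕ → S)), IsPathMeasure κ μκ →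
        (∀ s ∈ WinRegion Acc μ, (κ s).support ⊆
            ⋃ a ∈ {a : A s | Qstar P Acc γacc γ rn μ s a = 0}, (P s a).support) →
        (∀ s ∉ WinRegion Acc μ, ∃ a : A s,
            (∀ a' : A s, Qstar P Acc γacc γ rn μ s a' ≤ Qstar P Acc γacc γ rn μ s a) ∧
              κ s = P s a) →
        ∀ s : S, μκ s {ω | ∀ t, ω t ∉ Acc} =
          ⨆ π : (s' : S) → A s', μ π s {ω | ∀ t, ω t ∉ Acc} := by
  obtain ⟨hacc₀, hacc₁⟩ := hγacc
  obtain ⟨γ', hγ'₀, hγ'₁, hγ'⟩ := exists_forall_of_eventually_nhdsLT_one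
    (eventually_forall_sum_optSafe_le hμ habs hacc₀.le hacc₁ hrn)
  refine ⟨γ', hγ'₀, hγ'₁, fun γ hγ hγ₁ κ μκ hμκ hwin hlose s => ?_⟩
  rw [iSup_measure_safe_eq_optSafe hμ]
  refine le_antisymm (measure_safe_le_optSafe hμκ (fun u => ?_) s)
    (optSafe_le_measure_safe hμκ (fun u hu => ?_) s)
  · by_cases hW : u ∈ WinRegion Acc μ
    · exact .inl ((mem_winRegion_iff hμ).1 hW)
    · obtain ⟨a, -, ha⟩ := hlose u hW
      exact .inr ⟨a, ha⟩
  · by_cases hW : u ∈ WinRegion Acc μ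
    · refine (optSafe_le_one u).trans_eq ((κ u).sum_mul_eq_one fun s' hs' => ?_).symm
      obtain ⟨a, ha, hs'a⟩ := mem_iUnion₂.1 (hwin u hW hs')
      exact (mem_winRegion_iff hμ).1
        ((Qstar_eq_zero_iff hμ habs hacc₀.le hacc₁ (hγ'₀.trans hγ) hγ₁ hrn u a).1 ha hs'a)
    · obtain ⟨a, hmax, ha⟩ := hlose u hW
      rw [ha]
      exact (optSafe_eq_sum_of_forall_le hu (hγ' γ hγ hγ₁ u a hmax)).le

/-- for `γ` close enough to 1, the Markov chain induced by the permissive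
supervisor attains the maximum probability of satisfying the safety condition at every
state. -/
theorem supervisor_kernel_attains_max_safety_prob
    [Fintype S] [Nonempty S] [MeasurableSpace S] [MeasurableSingletonClass S]
    [∀ s, Fintype (A s)] [∀ s, Nonempty (A s)]
    (P : (s : S) → A s → PMF S) (Acc : Set S)
    (habs : ∀ s ∈ Acc, ∀ a : A s, (P s a).support ⊆ Acc)
    (μ : ((s : S) → A s) → S → Measure (ℕ → S))
    (hμ : ∀ π : (s : S) → A s, IsPathMeasure (fun s => P s (π s)) (μ π))
    (rn γacc : ℝ) (hrn : rn < 0) (hγacc : 0 < γacc ∧ γacc < 1) :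
    ∃ γ' : ℝ, 0 < γ' ∧ γ' < 1 ∧ ∀ γ : ℝ, γ' < γ → γ < 1 →
      ∀ (κ : S → PMF S) (μκ : S → Measure (ℕ → S)), IsPathMeasure κ μκ →
        (∀ s ∈ WinRegion Acc μ, (κ s).support ⊆
            ⋃ a ∈ {a : A s | Qstar P Acc γacc γ rn μ s a = 0}, (P s a).support) →
        (∀ s ∉ WinRegion Acc μ, ∃ a : A s,
            (∀ a' : A s, Qstar P Acc γacc γ rn μ s a' ≤ Qstar P Acc γacc γ rn μ s a) ∧
              κ s = P s a) →
        ∀ s : S, μκ s {ω | ∀ t, ω t ∉ Acc} =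
          ⨆ π : (s' : S) → A s', μ π s {ω | ∀ t, ω t ∉ Acc} :=
  supervisor_kernel_attains_max_safety_prob_general P Acc habs μ hμ rn γacc hrn hγacc
end

section
/- Let SV* be any supervisor such that for every s ∈ W, SV*(s) = ⋃ {ξ : ξ is a directed control pattern at s and there exists a supervisor SV with SV(s) = ξ that is surely safe from s}. Then for every s ∈ W: (i) SV* is surely safe from s, and (ii) for every supervisor SV' that is surely safe from s, |Re_{SV*}(s)| ≥ |Re_{SV'}(s)|. -/
/-- A control pattern at `s`: a nonempty set of enabled events containing every enabled
uncontrollable event. -/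
def ControlPattern {S E : Type*} (Euc : Set E) (enabled : S → Set E)
    (s : S) (ξ : Set E) : Prop :=
  ξ.Nonempty ∧ ξ ⊆ enabled s ∧ (Euc ∩ enabled s) ⊆ ξ

/-- A directed control pattern contains at most one controllable event. -/
def DirectedPattern {E : Type*} (Ec : Set E) (ξ : Set E) : Prop :=
  (ξ ∩ Ec).ncard ≤ 1

/-- A supervisor assigns a control pattern to every state. -/
def IsSupervisor {S E : Type*} (Euc : Set E) (enabled : S → Set E)
    (SV : S → Set E) : Prop :=
  ∀ s, ControlPattern Euc enabled s (SV s)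

/-- The reachable set from `s` under a supervisor: last states of finite paths whose
steps use enabled events of the supervisor. -/
def Reach {S E : Type*} (succ : S → E → Set S) (SV : S → Set E) (s : S) : Set S :=
  {t | ∃ (m : ℕ) (x : ℕ → S), x 0 = s ∧
    (∀ i < m, ∃ e ∈ SV (x i), x (i + 1) ∈ succ (x i) e) ∧ x m = t}

/-- A supervisor is surely safe from `s` if no reachable state is unsafe. -/
def SurelySafe {S E : Type*} (Acc : Set S) (succ : S → E → Set S)
    (SV : S → Set E) (s : S) : Prop :=
  Reach succ SV s ∩ Acc = ∅

/-- The winning region: states from which some supervisor is surely safe. -/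
def WinRegionC {S E : Type*} (Acc : Set S) (Euc : Set E) (enabled : S → Set E)
    (succ : S → E → Set S) : Set S :=
  {s | ∃ SV : S → Set E, IsSupervisor Euc enabled SV ∧ SurelySafe Acc succ SV s}

lemma reach_self {S E : Type*} (succ : S → E → Set S) (SV : S → Set E) (s : S) :
    s ∈ Reach succ SV s :=
  ⟨0, fun _ => s, rfl, by omega, rfl⟩

lemma reach_step {S E : Type*} {succ : S → E → Set S} {SV : S → Set E} {s t u : S} {e : E}
    (ht : t ∈ Reach succ SV s) (he : e ∈ SV t) (hu : u ∈ succ t e) :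
    u ∈ Reach succ SV s := by
  obtain ⟨m, x, hx0, hstep, hxm⟩ := ht
  refine ⟨m + 1, fun i => if i ≤ m then x i else u, by simp [hx0], ?_, by simp⟩
  intro i hi
  rcases lt_or_eq_of_le (Nat.lt_succ_iff.mp hi) with h | h
  · have h1 : i ≤ m := le_of_lt h
    have h2 : i + 1 ≤ m := h
    simp only [h1, h2, if_true]
    exact hstep i h
  · subst h
    simp only [le_refl, if_true, Nat.lt_irrefl, Nat.not_succ_le_self, if_false, hxm]
    exact ⟨e, he, hu⟩

lemma reach_ind {S E : Type*} {succ : S → E → Set S} {SV : S → Set E} {s : S}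
    (P : S → Prop) (h0 : P s)
    (hstep : ∀ t, t ∈ Reach succ SV s → P t → ∀ e ∈ SV t, ∀ u ∈ succ t e, P u) :
    ∀ t ∈ Reach succ SV s, P t := by
  rintro t ⟨m, x, hx0, hx, hxm⟩
  have key : ∀ i ≤ m, x i ∈ Reach succ SV s ∧ P (x i) := by
    intro i
    induction i with
    | zero => intro _; rw [hx0]; exact ⟨reach_self succ SV s, h0⟩
    | succ n ih =>
      intro hn
      have hn' : n < m := hn
      obtain ⟨hr, hp⟩ := ih (le_of_lt hn')
      obtain ⟨e, he, hsu⟩ := hx n hn'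
      exact ⟨reach_step hr he hsu, hstep _ hr hp e he _ hsu⟩
  rw [← hxm]; exact (key m le_rfl).2

lemma reach_trans {S E : Type*} {succ : S → E → Set S} {SV : S → Set E} {s t : S}
    (ht : t ∈ Reach succ SV s) : Reach succ SV t ⊆ Reach succ SV s := by
  intro u hu
  exact reach_ind (· ∈ Reach succ SV s) ht
    (fun a ha hPa e he v hv => reach_step hPa he hv) u hu

lemma reach_mono {S E : Type*} {succ : S → E → Set S} {SV1 SV2 : S → Set E} {s : S}
    (h : ∀ t ∈ Reach succ SV1 s, SV1 t ⊆ SV2 t) :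
    Reach succ SV1 s ⊆ Reach succ SV2 s := by
  intro u hu
  exact reach_ind (P := (· ∈ Reach succ SV2 s)) (reach_self succ SV2 s)
    (fun t ht hPt e he v hv => reach_step hPt (h t ht he) hv) u hu

lemma safe_of_reach {S E : Type*} {Acc : Set S} {succ : S → E → Set S} {SV : S → Set E}
    {s t : S} (hsafe : SurelySafe Acc succ SV s) (ht : t ∈ Reach succ SV s) :
    SurelySafe Acc succ SV t := by
  have := reach_trans ht
  rw [SurelySafe, Set.eq_empty_iff_forall_notMem] at hsafe ⊢
  exact fun u hu => hsafe u ⟨this hu.1, hu.2⟩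

/-- a supervisor enabling, at each winning state, the union of all winning
directed control patterns is surely safe on the winning region and maximizes the
cardinality of the reachable set among all surely safe supervisors. -/
theorem permissive_supervisor_safe_and_max_reach
    {S E : Type*} [Fintype S] [Nonempty S] [Fintype E]
    (Acc : Set S) (Ec Euc : Set E)
    (hpart : Ec ∪ Euc = Set.univ ∧ Ec ∩ Euc = ∅)
    (enabled : S → Set E) (hen : ∀ s, (enabled s).Nonempty)
    (succ : S → E → Set S) (hsucc : ∀ s, ∀ e ∈ enabled s, (succ s e).Nonempty)
    (SVstar : S → Set E) (hSVstar : IsSupervisor Euc enabled SVstar)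
    (hstar : ∀ s ∈ WinRegionC Acc Euc enabled succ,
      SVstar s = ⋃₀ {ξ : Set E | ControlPattern Euc enabled s ξ ∧
        DirectedPattern Ec ξ ∧
        ∃ SV : S → Set E, IsSupervisor Euc enabled SV ∧ SV s = ξ ∧
          SurelySafe Acc succ SV s}) :
    ∀ s ∈ WinRegionC Acc Euc enabled succ,
      SurelySafe Acc succ SVstar s ∧
        ∀ SV' : S → Set E, IsSupervisor Euc enabled SV' → SurelySafe Acc succ SV' s →
          (Reach succ SV' s).ncard ≤ (Reach succ SVstar s).ncard := by
  classical
  -- every winning state is not in Acc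
  have hWAcc : ∀ w ∈ WinRegionC Acc Euc enabled succ, w ∉ Acc := by
    rintro w ⟨SV, _, hsafe⟩ hwA
    rw [SurelySafe, Set.eq_empty_iff_forall_notMem] at hsafe
    exact hsafe w ⟨reach_self succ SV w, hwA⟩
  -- states reachable under SVstar from a winning state are winning
  have hReachW : ∀ s ∈ WinRegionC Acc Euc enabled succ,
      ∀ t ∈ Reach succ SVstar s, t ∈ WinRegionC Acc Euc enabled succ := by
    intro s hs
    refine reach_ind (· ∈ WinRegionC Acc Euc enabled succ) hs ?_
    intro t _ htW e he u hu
    rw [hstar t htW] at he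
    obtain ⟨ξ, ⟨hcp, hdir, SV, hSVsup, hSVt, hSVsafe⟩, heξ⟩ := he
    have hu' : u ∈ Reach succ SV t :=
      reach_step (reach_self succ SV t) (hSVt ▸ heξ) hu
    exact ⟨SV, hSVsup, safe_of_reach hSVsafe hu'⟩
  intro s hs
  constructor
  · rw [SurelySafe, Set.eq_empty_iff_forall_notMem]
    rintro t ⟨htR, htA⟩
    exact hWAcc t (hReachW s hs t htR) htA
  · intro SV' hSV'sup hSV'safe
    have hsub : Reach succ SV' s ⊆ Reach succ SVstar s := by
      refine reach_mono ?_
      intro t ht e he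
      have htW : t ∈ WinRegionC Acc Euc enabled succ :=
        ⟨SV', hSV'sup, safe_of_reach hSV'safe ht⟩
      rw [hstar t htW]
      set ξ : Set E := (Euc ∩ enabled t) ∪ {e} with hξ
      have heen : e ∈ enabled t := (hSV'sup t).2.1 he
      have hξsub : ξ ⊆ SV' t := by
        rintro x (hx | hx)
        · exact (hSV'sup t).2.2 hx
        · rw [Set.mem_singleton_iff] at hx; subst hx; exact he
      have hcp : ControlPattern Euc enabled t ξ := by
        refine ⟨⟨e, Or.inr rfl⟩, ?_, fun x hx => Or.inl hx⟩
        rintro x (hx | hx)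
        · exact hx.2
        · rw [Set.mem_singleton_iff] at hx; subst hx; exact heen
      have hdir : DirectedPattern Ec ξ := by
        have hsub1 : ξ ∩ Ec ⊆ {e} := by
          rintro x ⟨hx1 | hx1, hx2⟩
          · exfalso
            have : x ∈ Ec ∩ Euc := ⟨hx2, hx1.1⟩
            rw [hpart.2] at this; exact this
          · exact hx1
        calc (ξ ∩ Ec).ncard ≤ ({e} : Set E).ncard :=
              Set.ncard_le_ncard hsub1 (Set.finite_singleton e)
          _ = 1 := Set.ncard_singleton e
      set SV'' : S → Set E := Function.update SV' t ξ with hSV''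
      have hSV''t : SV'' t = ξ := Function.update_self t ξ SV'
      have hSV''sub : ∀ r, SV'' r ⊆ SV' r := by
        intro r
        by_cases hr : r = t
        · subst hr; rw [hSV''t]; exact hξsub
        · rw [hSV'', Function.update_of_ne hr]
      have hSV''sup : IsSupervisor Euc enabled SV'' := by
        intro r
        by_cases hr : r = t
        · subst hr; rw [hSV''t]; exact hcp
        · rw [hSV'', Function.update_of_ne hr]; exact hSV'sup r
      have hSV''safe : SurelySafe Acc succ SV'' t := by
        have h1 : Reach succ SV'' t ⊆ Reach succ SV' t :=
          reach_mono (fun r _ => hSV''sub r)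
        have h2 := safe_of_reach hSV'safe ht
        rw [SurelySafe, Set.eq_empty_iff_forall_notMem] at h2 ⊢
        exact fun u hu => h2 u ⟨h1 hu.1, hu.2⟩
      exact ⟨ξ, ⟨hcp, hdir, SV'', hSV''sup, hSV''t, hSV''safe⟩, Or.inr rfl⟩
    exact Set.ncard_le_ncard hsub (Set.toFinite _)
end

section
/- Let α ∈ (0,1) and let (Q^k)_{k∈ℕ} be any sequence of functions on pairs {(s,a) : s ∈ S, a ∈ A s} such that Q^0(s,a) = r_n if s ∈ Acc and Q^0(s,a) = 0 otherwise, and for every k, Q^{k+1} is obtained from Q^k by updating an arbitrary set of pairs, where each updated pair (s,a) receives the value Q^{k+1}(s,a) = (1 − α)·Q^k(s,a) + α·(R(s') + Γ(s')·max_{a' ∈ A s'} Q^k(s',a')) for some s' ∈ support(P s a), while all other pairs keep their value. Then for every k, every s ∈ S, and every a ∈ A s: if Q^k(s,a) < 0, then there is no policy π such that s ∉ Acc and μ^π_{s'}(Safe) = 1 for every s' ∈ support(P s a); equivalently, the maximum over policies of the probability of satisfying the safety condition when starting at s with first action a is strictly less than 1. -/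
/-!
Along the iterates, `Q k s a ≥ 0` for every winning pair `(s, a)`. Initially this holds because
`s ∉ Acc`. An update of a winning pair towards `s' ∈ supp (P s a)` sees `s' ∉ Acc`, hence reward `0`
and factor `γ`, and `max_{a'} Q k s' a' ≥ Q k s' (π s')`, where `(s', π s')` is again winning for
the same policy `π`: a chain that is almost surely safe from `s'` never starts in `Acc`, and is
almost surely safe from each successor of `s'`.
-/

open MeasureTheory Set
open scoped ENNReal Classical

variable {S : Type*}

variable {A : S → Type*}

open Filter

def prefixSet (n : ℕ) (x : ℕ → S) : Set (ℕ → S) := {ω | ∀ i ≤ n, ω i = x i}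

def pathCons (s : S) (x : ℕ → S) : ℕ → S
  | 0 => s
  | i + 1 => x i

section PathMeasure

variable [MeasurableSpace S] {p : S → PMF S} {μ : S → Measure (ℕ → S)}

theorem IsPathMeasure.measure_prefixSet_pathCons (hμ : IsPathMeasure p μ) (s : S) (n : ℕ)
    (x : ℕ → S) :
    μ s (prefixSet (n + 1) (pathCons s x)) = p s (x 0) * μ (x 0) (prefixSet n x) := by
  rw [prefixSet, prefixSet, hμ.2, hμ.2, Finset.prod_range_succ']
  simp [pathCons, mul_comm]

theorem IsPathMeasure.measure_prefixSet_of_ne (hμ : IsPathMeasure p μ) {s : S} {x : ℕ → S}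
    (hx : x 0 ≠ s) (n : ℕ) : μ s (prefixSet n x) = 0 := by
  simp [prefixSet, hμ.2, hx]

theorem IsPathMeasure.ae_apply_zero_eq (hμ : IsPathMeasure p μ) [MeasurableSingletonClass S]
    (s : S) : ∀ᵐ ω ∂μ s, ω 0 = s := by
  have := hμ.1 s
  have hmeas : MeasurableSet {ω : ℕ → S | ω 0 = s} :=
    (measurableSet_singleton s).preimage (measurable_pi_apply 0)
  have hcyl : {ω : ℕ → S | ω 0 = s} = {ω | ∀ i ≤ 0, ω i = (fun _ => s) i} := by simp
  rw [ae_iff_measure_eq hmeas.nullMeasurableSet, hcyl, hμ.2]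
  simp

theorem measure_forall_notMem_eq_one_iff [MeasurableSingletonClass S] [Countable S]
    (ν : Measure (ℕ → S)) [IsProbabilityMeasure ν] (B : Set S) :
    ν {ω | ∀ t, ω t ∉ B} = 1 ↔ ∀ t, ∀ᵐ ω ∂ν, ω t ∉ B := by
  have hmeas : MeasurableSet {ω : ℕ → S | ∀ t, ω t ∉ B} := by measurability
  rw [← ae_all_iff, ae_iff_measure_eq hmeas.nullMeasurableSet, measure_univ]

/-- A path that reaches `B` at time `t` from `s'` is, prefixed by `s`, a path that reaches `B`
at time `t + 1` from `s`; the cylinders of the two have masses differing by the factor `p s s'`. -/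
theorem IsPathMeasure.ae_notMem_of_ae_succ_notMem [Countable S] (hμ : IsPathMeasure p μ)
    {B : Set S} {s s' : S} (hs' : s' ∈ (p s).support) {t : ℕ} (h : ∀ᵐ ω ∂μ s, ω (t + 1) ∉ B) :
    ∀ᵐ ω ∂μ s', ω t ∉ B := by
  have hnull : ∀ x : ℕ → S, μ s' (prefixSet t x ∩ {ω | ω t ∈ B}) = 0 := by
    intro x
    by_cases hxB : x t ∈ B
    · refine measure_mono_null inter_subset_left ?_
      by_cases hx0 : x 0 = s'
      · have hcons : μ s (prefixSet (t + 1) (pathCons s x)) = 0 :=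
          measure_mono_null (fun ω hω => by simpa [hω (t + 1) le_rfl, pathCons] using hxB)
            (ae_iff.mp h)
        rw [hμ.measure_prefixSet_pathCons, hx0] at hcons
        exact (mul_eq_zero.mp hcons).resolve_left hs'
      · exact hμ.measure_prefixSet_of_ne hx0 t
    · convert measure_empty (μ := μ s')
      refine eq_empty_of_forall_notMem fun ω ⟨hω, hωB⟩ => hxB ?_
      simpa [hω t le_rfl] using hωB
  rw [ae_iff]
  simp only [not_not]
  refine measure_mono_null (fun ω hω => ?_) (measure_iUnion_null fun y : Fin (t + 1) → S =>
    hnull fun i => y ⟨min i t, Nat.lt_succ_of_le (min_le_right i t)⟩)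
  refine mem_iUnion.mpr ⟨fun i => ω i, fun i hi => ?_, hω⟩
  simp [Nat.min_eq_left hi]

theorem IsPathMeasure.notMem_and_measure_succ_eq_one [MeasurableSingletonClass S] [Countable S]
    (hμ : IsPathMeasure p μ) {B : Set S} {s : S} (h : μ s {ω | ∀ t, ω t ∉ B} = 1) :
    s ∉ B ∧ ∀ s' ∈ (p s).support, μ s' {ω | ∀ t, ω t ∉ B} = 1 := by
  have := hμ.1
  rw [measure_forall_notMem_eq_one_iff] at h
  refine ⟨?_, fun s' hs' => (measure_forall_notMem_eq_one_iff _ B).mpr fun t =>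
    hμ.ae_notMem_of_ae_succ_notMem hs' (h (t + 1))⟩
  obtain ⟨ω, hω, hω0⟩ := ((h 0).and (hμ.ae_apply_zero_eq s)).exists
  exact hω0 ▸ hω

end PathMeasure

/-- `(s, a)` is a winning pair in the paper's sense iff `IsWinningPair P Acc (μ π) s a` for some
policy `π`. -/
def IsWinningPair [MeasurableSpace S] (P : (s : S) → A s → PMF S) (Acc : Set S)
    (ν : S → Measure (ℕ → S)) (s : S) (a : A s) : Prop :=
  s ∉ Acc ∧ ∀ s' ∈ (P s a).support, ν s' {ω | ∀ t, ω t ∉ Acc} = 1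

theorem IsWinningPair.succ [MeasurableSpace S] [MeasurableSingletonClass S] [Countable S]
    {P : (s : S) → A s → PMF S} {Acc : Set S} {π : (s : S) → A s} {ν : S → Measure (ℕ → S)}
    (hν : IsPathMeasure (fun s => P s (π s)) ν) {s : S} {a : A s} (hw : IsWinningPair P Acc ν s a)
    {s' : S} (hs' : s' ∈ (P s a).support) : IsWinningPair P Acc ν s' (π s') :=
  hν.notMem_and_measure_succ_eq_one (hw.2 s' hs')

theorem qlearning_nonneg_of_isWinningPair [MeasurableSpace S] [MeasurableSingletonClass S]
    [Countable S] [∀ s, Finite (A s)] {P : (s : S) → A s → PMF S} {Acc : Set S}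
    {π : (s : S) → A s} {ν : S → Measure (ℕ → S)} (hν : IsPathMeasure (fun s => P s (π s)) ν)
    {rn γ γacc α : ℝ} (hγ : 0 ≤ γ) (hα₀ : 0 ≤ α) (hα₁ : α ≤ 1) {Q : ℕ → (s : S) → A s → ℝ}
    (h0 : ∀ (s : S) (a : A s), s ∉ Acc → 0 ≤ Q 0 s a)
    (hupd : ∀ (k : ℕ) (s : S) (a : A s),
      Q (k + 1) s a = Q k s a ∨
        ∃ s' ∈ (P s a).support,
          Q (k + 1) s a = (1 - α) * Q k s a +
            α * (Rw Acc γacc rn s' + Γw Acc γacc γ s' * (⨆ a' : A s', Q k s' a')))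
    (k : ℕ) (s : S) (a : A s) (hw : IsWinningPair P Acc ν s a) : 0 ≤ Q k s a := by
  induction k generalizing s a with
  | zero => exact h0 s a hw.1
  | succ k ih =>
    rcases hupd k s a with hQ | ⟨s', hs', hQ⟩
    · exact hQ ▸ ih s a hw
    · have hw' := hw.succ hν hs'
      have hsup : 0 ≤ ⨆ a', Q k s' a' :=
        (ih s' (π s') hw').trans (le_ciSup (finite_range _).bddAbove _)
      rw [hQ, Rw, Γw, if_neg hw'.1, if_neg hw'.1, zero_add]
      exact add_nonneg (mul_nonneg (sub_nonneg.mpr hα₁) (ih s a hw))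
        (mul_nonneg hα₀ (mul_nonneg hγ hsup))

theorem qlearning_negative_value_not_winning_pair_general
    [Fintype S] [MeasurableSpace S] [MeasurableSingletonClass S]
    [∀ s, Fintype (A s)]
    (P : (s : S) → A s → PMF S) (Acc : Set S)
    (μ : ((s : S) → A s) → S → Measure (ℕ → S))
    (hμ : ∀ π : (s : S) → A s, IsPathMeasure (fun s => P s (π s)) (μ π))
    (rn γ γacc : ℝ) (hγ : 0 < γ ∧ γ < 1)
    (α : ℝ) (hα : 0 < α ∧ α < 1)
    (Q : ℕ → (s : S) → A s → ℝ)
    (h0 : ∀ (s : S) (a : A s), Q 0 s a = if s ∈ Acc then rn else 0)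
    (hupd : ∀ (k : ℕ) (s : S) (a : A s),
      Q (k + 1) s a = Q k s a ∨
        ∃ s' ∈ (P s a).support,
          Q (k + 1) s a = (1 - α) * Q k s a +
            α * (Rw Acc γacc rn s' + Γw Acc γacc γ s' * (⨆ a' : A s', Q k s' a'))) :
    ∀ (k : ℕ) (s : S) (a : A s), Q k s a < 0 →
      ¬ ∃ π : (s : S) → A s, s ∉ Acc ∧
        ∀ s' ∈ (P s a).support, μ π s' {ω | ∀ t, ω t ∉ Acc} = 1 := by
  rintro k s a hneg ⟨π, hw⟩
  have h0' : ∀ (s : S) (a : A s), s ∉ Acc → 0 ≤ Q 0 s a := fun s a hs => by rw [h0, if_neg hs]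
  exact hneg.not_ge
    (qlearning_nonneg_of_isWinningPair (hμ π) hγ.1.le hα.1.le hα.2.le h0' hupd k s a hw)

/-- along the Q-learning iterates of Algorithm 2, every state-action pair
whose learned value becomes negative is not a winning pair: no policy keeps the chain
almost surely safe from every state in the support of `P s a` while `s` is safe. -/
theorem qlearning_negative_value_not_winning_pair
    [Fintype S] [Nonempty S] [MeasurableSpace S] [MeasurableSingletonClass S]
    [∀ s, Fintype (A s)] [∀ s, Nonempty (A s)]
    (P : (s : S) → A s → PMF S) (Acc : Set S)
    (habs : ∀ s ∈ Acc, ∀ a : A s, (P s a).support ⊆ Acc)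
    (μ : ((s : S) → A s) → S → Measure (ℕ → S))
    (hμ : ∀ π : (s : S) → A s, IsPathMeasure (fun s => P s (π s)) (μ π))
    (rn γ γacc : ℝ) (hrn : rn < 0) (hγ : 0 < γ ∧ γ < 1) (hγacc : 0 < γacc ∧ γacc < 1)
    (α : ℝ) (hα : 0 < α ∧ α < 1)
    (Q : ℕ → (s : S) → A s → ℝ)
    (h0 : ∀ (s : S) (a : A s), Q 0 s a = if s ∈ Acc then rn else 0)
    (hupd : ∀ (k : ℕ) (s : S) (a : A s),
      Q (k + 1) s a = Q k s a ∨
        ∃ s' ∈ (P s a).support,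
          Q (k + 1) s a = (1 - α) * Q k s a +
            α * (Rw Acc γacc rn s' + Γw Acc γacc γ s' * (⨆ a' : A s', Q k s' a'))) :
    ∀ (k : ℕ) (s : S) (a : A s), Q k s a < 0 →
      ¬ ∃ π : (s : S) → A s, s ∉ Acc ∧
        ∀ s' ∈ (P s a).support, μ π s' {ω | ∀ t, ω t ∉ Acc} = 1 :=
  qlearning_negative_value_not_winning_pair_general P Acc μ hμ rn γ γacc hγ α hα Q h0 hupd
end
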